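/- arXiv:1604.07293 — 7 statements merged into one kernel-verified Lean document; each statement's English description precedes it below -/
import Mathlib

section
/- Let K be a normal topological space, I a finite index set, (F_i)_{i∈I} a family of closed subsets of K and (U_i)_{i∈I} a family of open subsets of K such that F_i ⊆ U_i for all i∈I. Then there exists a family (V_i)_{i∈I} of open subsets of K such that: (i) F_i ⊆ V_i ⊆ closure(V_i) ⊆ U_i for all i∈I; and (ii) the families (F_i)_{i∈I}, (V_i)_{i∈I} and (closure(V_i))_{i∈I} are pairwise combinatorially equivalent. -/
open MeasureTheory Set Filter Topology
open scoped ENNReal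

section Defs

variable {Ω X Y : Type*}

/-- The fiber of a set `E ⊆ Ω × X` over `ω`. -/
def fiber (E : Set (Ω × X)) (ω : Ω) : Set X := {x | (ω, x) ∈ E}

/-- The iterates `T^n_ω = T_{θ^{n-1}ω} ∘ ⋯ ∘ T_ω` of a bundle RDS. -/
def itr (T : Ω → X → X) (θ : Ω → Ω) : ℕ → Ω → X → X
  | 0, _ => id
  | n + 1, ω => itr T θ n (θ ω) ∘ T ω

/-- Two families of sets with common index set are combinatorially equivalent if
the corresponding sub-intersections are simultaneously nonempty. -/
def CombEquiv {ι : Type*} (A B : ι → Set Y) : Prop :=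
  ∀ J : Set ι, (⋂ i ∈ J, A i).Nonempty ↔ (⋂ i ∈ J, B i).Nonempty

section Top

variable [TopologicalSpace X] [TopologicalSpace Y]

/-- A family of open sets covering the whole space. -/
def IsOpenCover {ι : Type*} (U : ι → Set X) : Prop :=
  (∀ i, IsOpen (U i)) ∧ (⋃ i, U i) = univ

/-- A family of relatively open subsets of `K` covering `K`. -/
def IsOpenCoverOn (K : Set X) {ι : Type*} (U : ι → Set X) : Prop :=
  (∀ i, ∃ V : Set X, IsOpen V ∧ U i = V ∩ K) ∧ K ⊆ ⋃ i, U i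

/-- `1 + ord`: the maximal multiplicity `sup_{x ∈ K} Σ_i 1_{U i}(x)` of the family `U` on `K`. -/
noncomputable def multOn (K : Set X) {ι : Type*} [Fintype ι] (U : ι → Set X) : ℕ :=
  sSup {m | ∃ x ∈ K, m = Nat.card {i // x ∈ U i}}

/-- `ord(U) = -1 + sup_{x ∈ K} Σ_i 1_{U i}(x)` (as a truncated natural number). -/
noncomputable def ordOn (K : Set X) {ι : Type*} [Fintype ι] (U : ι → Set X) : ℕ :=
  multOn K U - 1

/-- `V` refines `U` if every member of `V` is contained in some member of `U`. -/
def Refines {ι κ : Type*} (V : κ → Set X) (U : ι → Set X) : Prop :=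
  ∀ j, ∃ i, V j ⊆ U i

/-- `D(U) = min { ord(V) : V a finite relatively open cover of K refining U }`. -/
noncomputable def DOn (K : Set X) {ι : Type*} [Fintype ι] (U : ι → Set X) : ℕ :=
  sInf {q | ∃ (m : ℕ) (V : Fin m → Set X),
    IsOpenCoverOn K V ∧ Refines V U ∧ ordOn K V = q}

/-- `f : X → Y` is `U`-compatible if some finite open cover of `Y` pulls back to
a refinement of `U`. -/
def Compatible {ι : Type*} (U : ι → Set X) (f : X → Y) : Prop :=
  ∃ (m : ℕ) (W : Fin m → Set Y), IsOpenCover W ∧ Refines (fun j => f ⁻¹' (W j)) U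

/-- The covering dimension `dim Y = sup { D(V) : V a finite open cover of Y }`. -/
noncomputable def covDim (Z : Type*) [TopologicalSpace Z] : ℕ∞ :=
  ⨆ (m : ℕ) (V : Fin m → Set Z) (_ : IsOpenCover V), (DOn (univ : Set Z) V : ℕ∞)

/-- The dynamical cover `α_0^{n-1}(ω|E) = ⋁_{i=0}^{n-1} (T^i_ω)⁻¹ α(θ^i ω|E)` of the fiber
`E_ω`, indexed by `Fin n → ι`. -/
def dynCover (T : Ω → X → X) (θ : Ω → Ω) (E : Set (Ω × X)) {ι : Type*}
    (U : ι → Set X) (n : ℕ) (ω : Ω) : (Fin n → ι) → Set X :=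
  fun j => fiber E ω ∩
    ⋂ i : Fin n, (itr T θ (i : ℕ) ω) ⁻¹' (U (j i) ∩ fiber E (θ^[(i : ℕ)] ω))

end Top

/-- `Σ_{i=0}^{n-1} 1_A (T^i_ω x)`: the number of times the orbit of `x` up to time `n`
visits `A`. -/
noncomputable def orbCount (T : Ω → X → X) (θ : Ω → Ω) (A : Set X)
    (n : ℕ) (ω : Ω) (x : X) : ℕ :=
  Nat.card {i : Fin n // itr T θ (i : ℕ) ω x ∈ A}

/-- `b_n(ω) = sup_{x ∈ E_ω} Σ_{i=0}^{n-1} 1_A (T^i_ω x)`. -/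
noncomputable def bsup (T : Ω → X → X) (θ : Ω → Ω) (E : Set (Ω × X)) (A : Set X)
    (n : ℕ) (ω : Ω) : ℕ :=
  sSup {m | ∃ x ∈ fiber E ω, m = orbCount T θ A n ω x}

/-- The `ω`-orbit capacity `ocap^ω(A) = lim_{n→∞} (1/n) b_n(ω)` (as a `limsup`). -/
noncomputable def ocap (T : Ω → X → X) (θ : Ω → Ω) (E : Set (Ω × X)) (A : Set X)
    (ω : Ω) : ℝ :=
  Filter.atTop.limsup (fun n : ℕ => (bsup T θ E A n ω : ℝ) / n)

section Metric

variable [PseudoMetricSpace X]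

/-- The Bowen-type metric `d^ω_{ε,n}(x,y) = max_{0 ≤ k < n} d(T^k_ω x, T^k_ω y)/ε`. -/
noncomputable def dBowen (T : Ω → X → X) (θ : Ω → Ω) (ε : ℝ) (n : ℕ) (ω : Ω)
    (x y : X) : ℝ :=
  ⨆ k : Fin n, dist (itr T θ (k : ℕ) ω x) (itr T θ (k : ℕ) ω y) / ε

/-- The diameter of a set with respect to a (not necessarily standard) metric `ρ`. -/
noncomputable def diamIn (ρ : X → X → ℝ) (A : Set X) : ℝ :=
  sSup {r | ∃ x ∈ A, ∃ y ∈ A, r = ρ x y}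

/-- `cov(ω,ε,n)`: the minimal cardinality of a cover of `E_ω` by sets of
`d^ω_{ε,n}`-diameter strictly less than 1. -/
noncomputable def covN (T : Ω → X → X) (θ : Ω → Ω) (E : Set (Ω × X))
    (ε : ℝ) (n : ℕ) (ω : Ω) : ℕ :=
  sInf {m | ∃ A : Fin m → Set X, fiber E ω ⊆ (⋃ j, A j) ∧
    ∀ j, diamIn (dBowen T θ ε n ω) (A j) < 1}

/-- `sep(ω,ε,n)`: the maximal cardinality of a subset of `E_ω` whose distinct points are
at `d^ω_{ε,n}`-distance at least 1. -/
noncomputable def sepN (T : Ω → X → X) (θ : Ω → Ω) (E : Set (Ω × X))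
    (ε : ℝ) (n : ℕ) (ω : Ω) : ℕ :=
  sSup {m | ∃ F : Finset X, (F : Set X) ⊆ fiber E ω ∧ F.card = m ∧
    ∀ x ∈ F, ∀ y ∈ F, x ≠ y → 1 ≤ dBowen T θ ε n ω x y}

/-- `S'(ω,ε) = limsup_{n→∞} (1/n) log sep(ω,ε,n)`. -/
noncomputable def Ssep (T : Ω → X → X) (θ : Ω → Ω) (E : Set (Ω × X))
    (ω : Ω) (ε : ℝ) : ℝ :=
  Filter.atTop.limsup (fun n : ℕ => Real.log (sepN T θ E ε n ω) / n)

/-- `S(ω,ε) = lim_{n→∞} (1/n) log cov(ω,ε,n)` (the limit exists by subadditivity and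
equals the `limsup`). -/
noncomputable def Scov (T : Ω → X → X) (θ : Ω → Ω) (E : Set (Ω × X))
    (ω : Ω) (ε : ℝ) : ℝ :=
  Filter.atTop.limsup (fun n : ℕ => Real.log (covN T θ E ε n ω) / n)

/-- The fiberwise metric mean dimension computed from separated sets:
`liminf_{1 > ε → 0⁺} S'(ω,ε)/(-log ε)`. -/
noncomputable def mdimMfibSep (T : Ω → X → X) (θ : Ω → Ω) (E : Set (Ω × X)) (ω : Ω) : ℝ :=
  Filter.liminf (fun ε => Ssep T θ E ω ε / (-Real.log ε)) (nhdsWithin 0 (Ioo (0:ℝ) 1))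

/-- The fiberwise metric mean dimension `mdim_M(T,ω) = liminf_{1 > ε → 0⁺} S(ω,ε)/(-log ε)`. -/
noncomputable def mdimMfibCov (T : Ω → X → X) (θ : Ω → Ω) (E : Set (Ω × X)) (ω : Ω) : ℝ :=
  Filter.liminf (fun ε => Scov T θ E ω ε / (-Real.log ε)) (nhdsWithin 0 (Ioo (0:ℝ) 1))

/-- The topological entropy `h_top(T) = ∫_Ω sup_{0<ε<1} S'(ω,ε) dP(ω)`. -/
noncomputable def htop (T : Ω → X → X) (θ : Ω → Ω) (E : Set (Ω × X))
    {mΩ : MeasurableSpace Ω} (P : Measure Ω) : ℝ≥0∞ :=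
  ∫⁻ ω, ⨆ ε : Ioo (0:ℝ) 1, ENNReal.ofReal (Ssep T θ E ω (ε : ℝ)) ∂P

end Metric

section Mdim

variable [TopologicalSpace X] {mΩ : MeasurableSpace Ω}

/-- The mean topological dimension with respect to the cover `U`:
`mdim(T,α) = lim_{n→∞} (1/n) ∫_Ω D(α_0^{n-1}(ω|E)) dP(ω)` (the limit exists by
subadditivity and equals the `liminf`). -/
noncomputable def mdimCov (P : Measure Ω) (T : Ω → X → X) (θ : Ω → Ω) (E : Set (Ω × X))
    {ι : Type*} [Fintype ι] (U : ι → Set X) : ℝ≥0∞ :=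
  Filter.atTop.liminf (fun n : ℕ =>
    (∫⁻ ω, (DOn (fiber E ω) (dynCover T θ E U n ω) : ℝ≥0∞) ∂P) / (n : ℝ≥0∞))

/-- The mean topological dimension `mdim(T) = sup_α mdim(T,α)` over finite open covers. -/
noncomputable def mdim (P : Measure Ω) (T : Ω → X → X) (θ : Ω → Ω)
    (E : Set (Ω × X)) : ℝ≥0∞ :=
  ⨆ (m : ℕ) (U : Fin m → Set X) (_ : IsOpenCover U), mdimCov P T θ E U

end Mdim

end Defs


theorem stmt0 {K : Type*} [TopologicalSpace K] [NormalSpace K]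
    {ι : Type*} [Finite ι] (F U : ι → Set K)
    (hF : ∀ i, IsClosed (F i)) (hU : ∀ i, IsOpen (U i)) (hFU : ∀ i, F i ⊆ U i) :
    ∃ V : ι → Set K, (∀ i, IsOpen (V i)) ∧
      (∀ i, F i ⊆ V i ∧ V i ⊆ closure (V i) ∧ closure (V i) ⊆ U i) ∧
      CombEquiv F V ∧ CombEquiv F (fun i => closure (V i)) ∧
      CombEquiv V (fun i => closure (V i)) := by
  classical
  haveI := Fintype.ofFinite ι
  have key : ∀ s : Finset ι, ∃ V : ι → Set K,
      (∀ i, F i ⊆ V i ∧ closure (V i) ⊆ U i) ∧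
      (∀ i ∈ s, IsOpen (V i)) ∧
      (∀ i ∉ s, V i = F i) ∧
      (∀ J : Set ι, (⋂ i ∈ J, closure (V i)).Nonempty → (⋂ i ∈ J, F i).Nonempty) := by
    intro s
    induction s using Finset.induction_on with
    | empty =>
      refine ⟨F, fun i => ⟨subset_rfl, ?_⟩, by simp, fun i _ => rfl, fun J h => ?_⟩
      · rw [(hF i).closure_eq]; exact hFU i
      · obtain ⟨x, hx⟩ := h
        refine ⟨x, ?_⟩
        simp only [mem_iInter] at hx ⊢
        intro i hi
        have := hx i hi
        rwa [(hF i).closure_eq] at this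
    | @insert a s ha ih =>
      obtain ⟨V, hV1, hV2, hV3, hV4⟩ := ih
      set B : Set K := ⋃ J ∈ {J : Set ι | a ∈ J ∧ (⋂ i ∈ J, F i) = ∅},
        ⋂ i ∈ J \ {a}, closure (V i) with hB
      have hBclosed : IsClosed B := by
        apply (Set.toFinite _).isClosed_biUnion
        intro J _
        exact isClosed_biInter fun i _ => isClosed_closure
      have hdisj : F a ∩ B = ∅ := by
        ext x
        simp only [mem_inter_iff, mem_empty_iff_false, iff_false, not_and]
        intro hxa hxB
        simp only [hB, mem_iUnion, mem_setOf_eq] at hxB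
        obtain ⟨J, ⟨haJ, hJempty⟩, hxJ⟩ := hxB
        have : x ∈ ⋂ i ∈ J, closure (V i) := by
          simp only [mem_iInter] at hxJ ⊢
          intro i hi
          by_cases hia : i = a
          · rw [hia, hV3 a ha, (hF a).closure_eq]
            exact hxa
          · exact hxJ i ⟨hi, hia⟩
        have := hV4 J ⟨x, this⟩
        rw [hJempty] at this
        exact this.ne_empty rfl
      have hsub : F a ⊆ U a ∩ Bᶜ := by
        intro x hx
        refine ⟨hFU a hx, fun hxB => ?_⟩
        have : x ∈ F a ∩ B := ⟨hx, hxB⟩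
        rw [hdisj] at this
        exact this
      obtain ⟨W, hWopen, hFaW, hWcl⟩ :=
        normal_exists_closure_subset (hF a) ((hU a).inter hBclosed.isOpen_compl) hsub
      refine ⟨Function.update V a W, ?_, ?_, ?_, ?_⟩
      · intro i
        by_cases hia : i = a
        · subst hia
          simp only [Function.update_self]
          exact ⟨hFaW, fun x hx => (hWcl hx).1⟩
        · simp only [Function.update_of_ne hia]
          exact hV1 i
      · intro i hi
        by_cases hia : i = a
        · subst hia; simp only [Function.update_self]; exact hWopen
        · simp only [Function.update_of_ne hia]
          exact hV2 i (Finset.mem_of_mem_insert_of_ne hi hia)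
      · intro i hi
        have hia : i ≠ a := fun h => hi (h ▸ Finset.mem_insert_self a s)
        simp only [Function.update_of_ne hia]
        exact hV3 i (fun h => hi (Finset.mem_insert_of_mem h))
      · intro J hJ
        by_contra hJF
        rw [Set.not_nonempty_iff_eq_empty] at hJF
        obtain ⟨x, hx⟩ := hJ
        simp only [mem_iInter] at hx
        by_cases haJ : a ∈ J
        · have hxB : x ∈ B := by
            simp only [hB, mem_iUnion, mem_setOf_eq]
            refine ⟨J, ⟨haJ, hJF⟩, ?_⟩
            simp only [mem_iInter]
            intro i hi
            have := hx i hi.1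
            rwa [Function.update_of_ne hi.2] at this
          have hxW := hx a haJ
          rw [Function.update_self] at hxW
          exact (hWcl hxW).2 hxB
        · have : (⋂ i ∈ J, closure (V i)).Nonempty := by
            refine ⟨x, ?_⟩
            simp only [mem_iInter]
            intro i hi
            have hia : i ≠ a := fun h => haJ (h ▸ hi)
            have := hx i hi
            rwa [Function.update_of_ne hia] at this
          obtain ⟨y, hy⟩ := hV4 J this
          rw [hJF] at hy
          exact hy
  obtain ⟨V, hV1, hV2, _, hV4⟩ := key Finset.univ
  have hFV : ∀ J : Set ι, (⋂ i ∈ J, F i).Nonempty → (⋂ i ∈ J, V i).Nonempty := by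
    intro J ⟨x, hx⟩
    refine ⟨x, ?_⟩
    simp only [mem_iInter] at hx ⊢
    exact fun i hi => (hV1 i).1 (hx i hi)
  have hVcl : ∀ J : Set ι, (⋂ i ∈ J, V i).Nonempty → (⋂ i ∈ J, closure (V i)).Nonempty := by
    intro J ⟨x, hx⟩
    refine ⟨x, ?_⟩
    simp only [mem_iInter] at hx ⊢
    exact fun i hi => subset_closure (hx i hi)
  refine ⟨V, fun i => hV2 i (Finset.mem_univ i),
    fun i => ⟨(hV1 i).1, subset_closure, (hV1 i).2⟩, ?_, ?_, ?_⟩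
  · exact fun J => ⟨hFV J, fun h => hV4 J (hVcl J h)⟩
  · exact fun J => ⟨fun h => hVcl J (hFV J h), hV4 J⟩
  · exact fun J => ⟨hVcl J, fun h => hFV J (hV4 J h)⟩
end

section
/- Under the Setup, for every n ∈ ℕ and every finite open cover α of X, the function ω ↦ D(α_0^{n-1}(ω|E)) from Ω to ℕ is F-measurable. -/
open MeasureTheory Set Filter Topology
open scoped ENNReal

/-! Outside a null set of `ω`, every map along the `θ`-orbit of `ω` is continuous on its fiber and
maps it into the next fiber, so `α_0^{n-1}(ω|E)` is a relatively open cover of the compact fiber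
`E_ω`. Merging the members of an optimal refinement that lie in the same member of this cover, and
then shrinking them by compactness to finite unions of sets from a fixed countable basis, shows
that `D ≤ q` iff one of countably many candidate families (a finite union of basic sets for each
member of the cover) covers `E_ω`, lies memberwise inside the cover and has multiplicity at most
`q + 1` on `E_ω`. For a fixed candidate this says that `E_ω` is contained in the fiber over `ω` of
a measurable subset of `Ω × X`, a condition that is measurable in `ω` by the measurable projection
theorem, as `P` is complete. Thus `{D ≤ q}` is almost everywhere equal to a measurable set.

The projection theorem reduces to analytic sets: a product-measurable set is the preimage of a
Borel subset of `(ℕ → Bool) × X` under `(φ, id)` for some measurable `φ`, and an analytic set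
`f '' (ℕ → ℕ)` is null-measurable because bounding the coordinates of `ℕ → ℕ` one at a time
produces closed subsets of it of almost full measure. -/

theorem Monotone.exists_measure_iUnion_le_add {Y : Type*} [MeasurableSpace Y] (μ : Measure Y)
    [IsFiniteMeasure μ] {s : ℕ → Set Y} (hs : Monotone s) {η : ℝ≥0∞} (hη : η ≠ 0) :
    ∃ m, μ (⋃ k, s k) ≤ μ (s m) + η := by
  have : μ (⋃ k, s k) < ⨆ m, (μ (s m) + η) := by
    rw [← ENNReal.iSup_add, ← hs.measure_iUnion]
    exact ENNReal.lt_add_right (measure_ne_top μ _) hη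
  obtain ⟨m, hm⟩ := lt_iSup_iff.1 this
  exact ⟨m, hm.le⟩

theorem iInter_closure_image_subset_image_iInter {Y : Type*} [TopologicalSpace Y] [T2Space Y]
    {f : (ℕ → ℕ) → Y} (hf : Continuous f) {A : ℕ → Set (ℕ → ℕ)} (hA : Antitone A)
    (hAc : ∀ k, IsClosed (A k)) (hAb : ∀ i, ∃ k b, A k ⊆ {x | x i ≤ b}) :
    ⋂ k, closure (f '' A k) ⊆ f '' ⋂ k, A k := by
  intro y hy
  let G : ℕ → Filter (ℕ → ℕ) := fun k => comap f (𝓝 y) ⊓ 𝓟 (A k)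
  have hG : ∀ k, (G k).NeBot := fun k => neBot_inf_comap_iff_map'.2 <| by
    rw [map_principal]
    exact mem_closure_iff_clusterPt.1 (mem_iInter.1 hy k)
  have : (⨅ k, G k).NeBot := iInf_neBot_of_directed'
    (Antitone.directed_ge fun k k' h => inf_le_inf_left _ (principal_mono.2 (hA h))) hG
  -- every coordinate is eventually bounded along `𝒰`, so `𝒰` converges
  let 𝒰 := Ultrafilter.of (⨅ k, G k)
  have h𝒰 : ∀ k, A k ∈ 𝒰 := fun k =>
    Ultrafilter.of_le _ (mem_iInf_of_mem k (mem_inf_of_right (mem_principal_self _)))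
  have hcoord : ∀ i, ∃ c, Tendsto (fun x : ℕ → ℕ => x i) 𝒰 (𝓝 c) := by
    intro i
    obtain ⟨k, b, hk⟩ := hAb i
    obtain ⟨c, -, hc⟩ := (𝒰.map fun x : ℕ → ℕ => x i).eq_pure_of_finite_mem (finite_Iic b)
      (show (fun x : ℕ → ℕ => x i) ⁻¹' Iic b ∈ 𝒰 from mem_of_superset (h𝒰 k) hk)
    exact ⟨c, (congrArg Ultrafilter.toFilter hc).le.trans (pure_le_nhds c)⟩
  choose c hc using hcoord
  have hlim : Tendsto id 𝒰 (𝓝 c) := tendsto_pi_nhds.2 hc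
  refine ⟨c, mem_iInter.2 fun k => (hAc k).mem_of_tendsto hlim (h𝒰 k), ?_⟩
  have hy𝒰 : Tendsto f 𝒰 (𝓝 y) :=
    tendsto_comap_iff.1 ((Ultrafilter.of_le _).trans (iInf_le_of_le 0 inf_le_left))
  exact tendsto_nhds_unique ((hf.tendsto c).comp hlim) hy𝒰

theorem exists_isClosed_subset_range_measure_le_add {Y : Type*} [TopologicalSpace Y]
    [T2Space Y] [MeasurableSpace Y] [OpensMeasurableSpace Y] (μ : Measure Y) [IsFiniteMeasure μ]
    {f : (ℕ → ℕ) → Y} (hf : Continuous f) {δ : ℝ≥0∞} (hδ : δ ≠ 0) :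
    ∃ K, IsClosed K ∧ K ⊆ range f ∧ μ (range f) ≤ μ K + δ := by
  obtain ⟨ε, hε, hεδ⟩ := ENNReal.exists_pos_sum_of_countable' hδ ℕ
  have hbound : ∀ (S : Set (ℕ → ℕ)) (i : ℕ), ∃ b,
      μ (f '' S) ≤ μ (f '' (S ∩ {x | x i ≤ b})) + ε i := fun S i => by
    have hS : ⋃ b, f '' (S ∩ {x | x i ≤ b}) = f '' S := by
      rw [← image_iUnion, ← inter_iUnion,
        iUnion_eq_univ_iff.2 fun x => ⟨x i, le_refl (x i)⟩, inter_univ]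
    rw [← hS]
    exact Monotone.exists_measure_iUnion_le_add μ (s := fun b => f '' (S ∩ {x | x i ≤ b}))
      (fun b b' h => image_mono (inter_subset_inter_right _ fun x hx => le_trans hx h))
      (hε i).ne'
  choose b hb using hbound
  -- `A k` bounds the first `k` coordinates, each bound costing at most `ε i` of measure
  let A : ℕ → Set (ℕ → ℕ) := fun k => Nat.rec univ (fun i S => S ∩ {x | x i ≤ b S i}) k
  have hA : Antitone A := antitone_nat_of_succ_le fun k => inter_subset_left
  have hAc : ∀ k, IsClosed (A k) := fun k => by
    induction k with
    | zero => exact isClosed_univ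
    | succ k ih => exact ih.inter (isClosed_le (continuous_apply k) continuous_const)
  have hμA : ∀ k, μ (range f) ≤ μ (f '' A k) + ∑ i ∈ Finset.range k, ε i := fun k => by
    induction k with
    | zero => simp [A, image_univ]
    | succ k ih =>
      calc μ (range f) ≤ μ (f '' A k) + ∑ i ∈ Finset.range k, ε i := ih
        _ ≤ μ (f '' A (k + 1)) + ε k + ∑ i ∈ Finset.range k, ε i := by
          gcongr
          exact hb (A k) k
        _ = _ := by rw [Finset.sum_range_succ]; ring
  have hK : ⋂ k, closure (f '' A k) ⊆ range f :=
    (iInter_closure_image_subset_image_iInter hf hA hAc fun i =>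
      ⟨i + 1, b (A i) i, inter_subset_right⟩).trans (image_subset_range _ _)
  refine ⟨_, isClosed_iInter fun _ => isClosed_closure, hK, ?_⟩
  rw [Antitone.measure_iInter (fun k k' h => closure_mono (image_mono (hA h)))
    (fun _ => isClosed_closure.nullMeasurableSet) ⟨0, measure_ne_top μ _⟩, ENNReal.iInf_add]
  exact le_iInf fun k => (hμA k).trans (add_le_add (measure_mono subset_closure)
    ((ENNReal.sum_le_tsum _).trans hεδ.le))

theorem MeasureTheory.AnalyticSet.nullMeasurableSet {Y : Type*} [TopologicalSpace Y]
    [T2Space Y] [MeasurableSpace Y] [OpensMeasurableSpace Y] {μ : Measure Y} [IsFiniteMeasure μ]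
    {A : Set Y} (hA : AnalyticSet A) : NullMeasurableSet A μ := by
  rw [AnalyticSet] at hA
  rcases hA with rfl | ⟨f, hf, rfl⟩
  · exact .empty
  choose K hKc hKf hμK using fun k : ℕ => exists_isClosed_subset_range_measure_le_add μ hf
    (ENNReal.inv_ne_zero.2 (ENNReal.natCast_ne_top k))
  have hK : MeasurableSet (⋃ k, K k) := .iUnion fun k => (hKc k).measurableSet
  have hle : μ (range f) ≤ μ (⋃ k, K k) := ENNReal.le_of_forall_pos_le_add fun ε hε _ => by
    obtain ⟨k, hk⟩ := ENNReal.exists_inv_nat_lt (ENNReal.coe_pos.2 hε).ne'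
    exact (hμK k).trans (add_le_add (measure_mono (subset_iUnion K k)) hk.le)
  exact hK.nullMeasurableSet.congr (ae_eq_of_subset_of_measure_ge (iUnion_subset hKf) hle
    hK.nullMeasurableSet (measure_ne_top μ _))

theorem MeasurableSet.exists_eq_preimage_prodMap {Ω X : Type*} [MeasurableSpace Ω]
    [MeasurableSpace X] {M : Set (Ω × X)} (hM : MeasurableSet M) :
    ∃ φ : Ω → ℕ → Bool, Measurable φ ∧
      ∃ M' : Set ((ℕ → Bool) × X), MeasurableSet M' ∧ M = Prod.map φ id ⁻¹' M' := by
  classical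
  rw [← generateFrom_prod] at hM
  induction M, hM using MeasurableSpace.generateFrom_induction with
  | hC _ hst =>
    obtain ⟨s, hs : MeasurableSet s, t, ht : MeasurableSet t, rfl⟩ := hst
    refine ⟨fun ω _ => decide (ω ∈ s), measurable_pi_lambda _ fun _ => measurable_to_bool ?_,
      ((fun c : ℕ → Bool => c 0) ⁻¹' {true}) ×ˢ t,
      ((measurable_pi_apply 0) (measurableSet_singleton true)).prod ht, ?_⟩
    · convert hs using 1
      ext
      simp
    · ext p
      simp
  | empty => exact ⟨fun _ _ => false, measurable_const, ∅, .empty, rfl⟩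
  | compl _ _ ih =>
    obtain ⟨φ, hφ, M', hM', rfl⟩ := ih
    exact ⟨φ, hφ, M'ᶜ, hM'.compl, rfl⟩
  | iUnion M _ ih =>
    choose φ hφ M' hM' hM using ih
    refine ⟨fun ω j => φ j.unpair.1 ω j.unpair.2,
      measurable_pi_lambda _ fun j => (measurable_pi_apply _).comp (hφ _),
      ⋃ k, Prod.map (fun c i => c (Nat.pair k i)) id ⁻¹' M' k,
      .iUnion fun k => (((measurable_pi_lambda _ fun i => measurable_pi_apply _).comp
        measurable_fst).prodMk measurable_snd) (hM' k), ?_⟩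
    simp only [preimage_iUnion, hM]
    refine iUnion_congr fun k => ?_
    ext p
    simp only [mem_preimage, Prod.map, id, Nat.unpair_pair]

theorem MeasurableSet.image_fst_of_isComplete {Ω X : Type*} [MeasurableSpace Ω]
    [TopologicalSpace X] [PolishSpace X] [MeasurableSpace X] [BorelSpace X]
    (μ : Measure Ω) [IsFiniteMeasure μ] [μ.IsComplete] {M : Set (Ω × X)}
    (hM : MeasurableSet M) : MeasurableSet (Prod.fst '' M) := by
  obtain ⟨φ, hφ, M', hM', rfl⟩ := hM.exists_eq_preimage_prodMap
  have : PolishSpace (ℕ → Bool) := {}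
  have hfst : Prod.fst '' (Prod.map φ id ⁻¹' M') = φ ⁻¹' (Prod.fst '' M') := by
    ext ω
    simp
  rw [hfst]
  exact ((hM'.analyticSet.image_of_continuous continuous_fst).nullMeasurableSet.preimage
    (hφ.measurePreserving μ).quasiMeasurePreserving).measurable_of_complete

theorem measurableSet_setOf_fiber_subset {Ω X : Type*} [MeasurableSpace Ω]
    [TopologicalSpace X] [PolishSpace X] [MeasurableSpace X] [BorelSpace X]
    (μ : Measure Ω) [IsFiniteMeasure μ] [μ.IsComplete] {M S : Set (Ω × X)}
    (hM : MeasurableSet M) (hS : MeasurableSet S) :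
    MeasurableSet {ω | fiber M ω ⊆ fiber S ω} := by
  have : {ω | fiber M ω ⊆ fiber S ω} = (Prod.fst '' (M \ S))ᶜ := by
    ext ω
    simp [fiber, subset_def]
  rw [this]
  exact ((hM.diff hS).image_fst_of_isComplete μ).compl

theorem IsCompact.exists_finset_basis_shrinking {X ι : Type*} [TopologicalSpace X]
    {K : Set X} (hK : IsCompact K) {B : Set (Set X)}
    (hB : TopologicalSpace.IsTopologicalBasis B) {W : ι → Set X} (hW : ∀ i, IsOpen (W i))
    (hKW : K ⊆ ⋃ i, W i) :
    ∃ F : ι → Finset B, (∀ i, ⋃ s ∈ F i, (s : Set X) ⊆ W i) ∧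
      K ⊆ ⋃ i, ⋃ s ∈ F i, (s : Set X) := by
  classical
  obtain ⟨t, ht⟩ := hK.elim_finite_subcover
    (fun p : {p : ι × B // (p.2 : Set X) ⊆ W p.1} => p.1.2) (fun p => hB.isOpen p.1.2.2)
    fun x hx => by
      obtain ⟨i, hi⟩ := mem_iUnion.1 (hKW hx)
      obtain ⟨s, hsB, hxs, hsW⟩ := hB.exists_subset_of_mem_open hi (hW i)
      exact mem_iUnion.2 ⟨⟨(i, ⟨s, hsB⟩), hsW⟩, hxs⟩
  refine ⟨fun i => (t.filter fun p => p.1.1 = i).image fun p => p.1.2, fun i => ?_, ?_⟩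
  · simp only [Finset.mem_image, Finset.mem_filter, iUnion_subset_iff]
    rintro _ ⟨p, ⟨-, rfl⟩, rfl⟩
    exact p.2
  · refine ht.trans (iUnion₂_subset fun p hp => ?_)
    exact subset_iUnion_of_subset p.1.1 (subset_biUnion_of_mem (u := fun s : B => (s : Set X))
      (Finset.mem_image.2 ⟨p, Finset.mem_filter.2 ⟨hp, rfl⟩, rfl⟩))

section CoveringDimension

variable {X ι : Type*}

def shrinkingSet (W U : ι → Set X) (q : ℕ) : Set X :=
  {x | (∀ i, x ∈ W i → x ∈ U i) ∧ Nat.card {i // x ∈ W i} ≤ q + 1}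

variable {K : Set X} [Fintype ι]

theorem shrinkingSet_anti {W W' U : ι → Set X} (h : ∀ i, W' i ⊆ W i) {q : ℕ} :
    shrinkingSet W U q ⊆ shrinkingSet W' U q := fun _ ⟨hWU, hW⟩ =>
  ⟨fun i hi => hWU i (h i hi),
    (Nat.card_le_card_of_injective (Subtype.impEmbedding _ _ fun i hi => h i hi)
      (Subtype.impEmbedding _ _ _).injective).trans hW⟩

theorem ordOn_le_iff {V : ι → Set X} {q : ℕ} :
    ordOn K V ≤ q ↔ ∀ x ∈ K, Nat.card {i // x ∈ V i} ≤ q + 1 := by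
  have hbdd : BddAbove {m | ∃ x ∈ K, m = Nat.card {i // x ∈ V i}} :=
    ⟨Nat.card ι, by rintro _ ⟨x, -, rfl⟩; exact Finite.card_subtype_le _⟩
  rw [ordOn, Nat.sub_le_iff_le_add, multOn, csSup_le_iff' hbdd]
  simp only [mem_ofPred_eq, forall_exists_index, and_imp]
  exact ⟨fun h x hx => h _ x hx rfl, fun h _ x hx hm => hm ▸ h x hx⟩

variable [TopologicalSpace X]

theorem exists_fin_isOpenCoverOn {α κ : Type*} [Fintype κ] {U : α → Set X} {V : κ → Set X}
    (hV : IsOpenCoverOn K V) (hVU : Refines V U) :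
    ∃ (m : ℕ) (V' : Fin m → Set X),
      IsOpenCoverOn K V' ∧ Refines V' U ∧ ordOn K V' = ordOn K V := by
  let e := (Fintype.equivFin κ).symm
  refine ⟨_, V ∘ e, ⟨fun j => hV.1 (e j), fun x hx => ?_⟩, fun j => hVU (e j), ?_⟩
  · obtain ⟨j, hj⟩ := mem_iUnion.1 (hV.2 hx)
    exact mem_iUnion.2 ⟨e.symm j, by simpa using hj⟩
  · have hcard : ∀ x, Nat.card {j // x ∈ V (e j)} = Nat.card {i // x ∈ V i} := fun x =>
      Nat.card_congr (e.subtypeEquiv fun _ => Iff.rfl)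
    simp only [ordOn, multOn, Function.comp_apply, hcard]

theorem DOn_le_ordOn {κ : Type*} [Fintype κ] {U : ι → Set X} {V : κ → Set X}
    (hV : IsOpenCoverOn K V) (hVU : Refines V U) : DOn K U ≤ ordOn K V :=
  Nat.sInf_le (exists_fin_isOpenCoverOn hV hVU)

theorem exists_ordOn_eq_DOn {U : ι → Set X} (hU : IsOpenCoverOn K U) :
    ∃ (m : ℕ) (V : Fin m → Set X), IsOpenCoverOn K V ∧ Refines V U ∧ ordOn K V = DOn K U :=
  Nat.sInf_mem (s := {q | ∃ (m : ℕ) (V : Fin m → Set X),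
    IsOpenCoverOn K V ∧ Refines V U ∧ ordOn K V = q})
    ⟨_, exists_fin_isOpenCoverOn hU fun i => ⟨i, le_rfl⟩⟩

theorem DOn_le_iff_exists_shrinking {U : ι → Set X} (hU : IsOpenCoverOn K U) {q : ℕ} :
    DOn K U ≤ q ↔ ∃ W : ι → Set X, (∀ i, IsOpen (W i)) ∧ K ⊆ ⋃ i, W i ∧
      K ⊆ shrinkingSet W U q := by
  constructor
  · intro hq
    obtain ⟨m, V, hV, hVU, hVq⟩ := exists_ordOn_eq_DOn hU
    choose W' hW' hVW' using hV.1
    choose t ht using hVU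
    -- merge the members of `V` with the same target in `U`
    refine ⟨fun i => ⋃ (j) (_ : t j = i), W' j, fun i => isOpen_biUnion fun j _ => hW' j,
      fun x hx => ?_, fun x hx => ⟨?_, ?_⟩⟩
    · obtain ⟨j, hj⟩ := mem_iUnion.1 (hV.2 hx)
      rw [hVW' j] at hj
      exact mem_iUnion.2 ⟨t j, mem_iUnion₂.2 ⟨j, rfl, hj.1⟩⟩
    · rintro i hi
      obtain ⟨j, rfl, hj⟩ := mem_iUnion₂.1 hi
      exact ht j ((hVW' j).symm.subset ⟨hj, hx⟩)
    · refine le_trans (Nat.card_le_card_of_surjective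
        (fun j : {j // x ∈ V j} => ⟨t j, mem_iUnion₂.2 ⟨j, rfl, ((hVW' j).subset j.2).1⟩⟩) ?_)
        (ordOn_le_iff.1 (hVq.trans_le hq) x hx)
      rintro ⟨i, hi⟩
      obtain ⟨j, rfl, hj⟩ := mem_iUnion₂.1 hi
      exact ⟨⟨j, (hVW' j).symm.subset ⟨hj, hx⟩⟩, rfl⟩
  · rintro ⟨W, hW, hKW, hKU⟩
    refine (DOn_le_ordOn (V := fun i => W i ∩ K) ⟨fun i => ⟨W i, hW i, rfl⟩, fun x hx => ?_⟩
      fun i => ⟨i, fun x hx => (hKU hx.2).1 i hx.1⟩).trans (ordOn_le_iff.2 fun x hx => ?_)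
    · obtain ⟨i, hi⟩ := mem_iUnion.1 (hKW hx)
      exact mem_iUnion.2 ⟨i, hi, hx⟩
    · exact (shrinkingSet_anti (fun i => inter_subset_left) (hKU hx)).2

theorem DOn_le_iff_exists_finset_basis (hK : IsCompact K) {U : ι → Set X}
    (hU : IsOpenCoverOn K U) {B : Set (Set X)} (hB : TopologicalSpace.IsTopologicalBasis B)
    {q : ℕ} :
    DOn K U ≤ q ↔ ∃ F : ι → Finset B, K ⊆ ⋃ i, ⋃ s ∈ F i, (s : Set X) ∧
      K ⊆ shrinkingSet (fun i => ⋃ s ∈ F i, (s : Set X)) U q := by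
  rw [DOn_le_iff_exists_shrinking hU]
  constructor
  · rintro ⟨W, hW, hKW, hKU⟩
    obtain ⟨F, hFW, hKF⟩ := hK.exists_finset_basis_shrinking hB hW hKW
    exact ⟨F, hKF, hKU.trans (shrinkingSet_anti hFW)⟩
  · rintro ⟨F, hKF, hKU⟩
    exact ⟨_, fun i => isOpen_biUnion fun s _ => hB.isOpen s.2, hKF, hKU⟩

end CoveringDimension

theorem measurableSet_shrinkingSet {Ω X ι : Type*} [MeasurableSpace Ω] [MeasurableSpace X]
    [Finite ι] {W : ι → Set X} (hW : ∀ i, MeasurableSet (W i)) {U : Ω → ι → Set X}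
    (hU : ∀ i, MeasurableSet {p : Ω × X | p.2 ∈ U p.1 i}) (q : ℕ) :
    MeasurableSet {p : Ω × X | p.2 ∈ shrinkingSet W (U p.1) q} := by
  have hmem : ∀ i, Measurable fun p : Ω × X => p.2 ∈ W i := fun i =>
    measurableSet_setOfPred.1 (measurable_snd (hW i))
  refine measurableSet_setOfPred.2 ((Measurable.forall fun i => (hmem i).imp
    (measurableSet_setOfPred.1 (hU i))).and ?_)
  exact (Measurable.of_discrete (f := fun v : ι → Prop => Nat.card {i // v i} ≤ q + 1)).comp
    (measurable_pi_lambda _ hmem)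

section Dynamics

variable {Ω X : Type*} {T : Ω → X → X} {θ : Ω → Ω}

theorem measurable_itr [MeasurableSpace Ω] [MeasurableSpace X] (hθ : Measurable θ)
    (hT : Measurable fun p : Ω × X => T p.1 p.2) (i : ℕ) :
    Measurable fun p : Ω × X => itr T θ i p.1 p.2 := by
  induction i with
  | zero => exact measurable_snd
  | succ i ih => exact ih.comp ((hθ.comp measurable_fst).prodMk hT)

theorem measurableSet_dynCover [MeasurableSpace Ω] [TopologicalSpace X] [MeasurableSpace X]
    (hθ : Measurable θ) (hT : Measurable fun p : Ω × X => T p.1 p.2) {E : Set (Ω × X)}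
    (hE : MeasurableSet E) {ι : Type*} {U : ι → Set X} (hU : ∀ i, MeasurableSet (U i)) {n : ℕ}
    (a : Fin n → ι) : MeasurableSet {p : Ω × X | p.2 ∈ dynCover T θ E U n p.1 a} := by
  have hit := fun i : Fin n => measurable_itr hθ hT i
  have : {p : Ω × X | p.2 ∈ dynCover T θ E U n p.1 a} = E ∩ ⋂ i : Fin n,
      (fun p : Ω × X => itr T θ i p.1 p.2) ⁻¹' U (a i) ∩
        (fun p : Ω × X => (θ^[i] p.1, itr T θ i p.1 p.2)) ⁻¹' E := by
    ext p
    simp [dynCover, fiber]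
  rw [this]
  exact hE.inter (.iInter fun i => (hit i (hU (a i))).inter
    ((((hθ.iterate i).comp measurable_fst).prodMk (hit i)) hE))

variable {E : Set (Ω × X)} {ω : Ω}

theorem mapsTo_itr
    (hmap : ∀ i, MapsTo (T (θ^[i] ω)) (fiber E (θ^[i] ω)) (fiber E (θ (θ^[i] ω)))) (i : ℕ) :
    MapsTo (itr T θ i ω) (fiber E ω) (fiber E (θ^[i] ω)) := by
  induction i generalizing ω with
  | zero => exact mapsTo_id _
  | succ i ih => exact (ih fun k => hmap (k + 1)).comp (hmap 0)

theorem continuousOn_itr [TopologicalSpace X]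
    (hmap : ∀ i, MapsTo (T (θ^[i] ω)) (fiber E (θ^[i] ω)) (fiber E (θ (θ^[i] ω))))
    (hcont : ∀ i, ContinuousOn (T (θ^[i] ω)) (fiber E (θ^[i] ω))) (i : ℕ) :
    ContinuousOn (itr T θ i ω) (fiber E ω) := by
  induction i generalizing ω with
  | zero => exact continuousOn_id
  | succ i ih =>
    exact (ih (fun k => hmap (k + 1)) fun k => hcont (k + 1)).comp (hcont 0) (hmap 0)

theorem isOpenCoverOn_dynCover [TopologicalSpace X] {ι : Type*} {U : ι → Set X}
    (hU : IsOpenCover U)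
    (hmap : ∀ i, MapsTo (T (θ^[i] ω)) (fiber E (θ^[i] ω)) (fiber E (θ (θ^[i] ω))))
    (hcont : ∀ i, ContinuousOn (T (θ^[i] ω)) (fiber E (θ^[i] ω))) (n : ℕ) :
    IsOpenCoverOn (fiber E ω) (dynCover T θ E U n ω) := by
  refine ⟨fun a => ?_, fun x hx => ?_⟩
  · choose V hV hVU using fun i : Fin n =>
      continuousOn_iff'.1 (continuousOn_itr hmap hcont i) (U (a i)) (hU.1 (a i))
    refine ⟨⋂ i, V i, isOpen_iInter_of_finite hV, ?_⟩
    ext x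
    simp only [dynCover, mem_inter_iff, mem_iInter, mem_preimage]
    constructor
    · rintro ⟨hx, h⟩
      exact ⟨fun i => ((hVU i).subset ⟨(h i).1, hx⟩).1, hx⟩
    · rintro ⟨h, hx⟩
      exact ⟨hx, fun i => ⟨((hVU i).symm.subset ⟨h i, hx⟩).1, mapsTo_itr hmap i hx⟩⟩
  · choose a ha using fun i : Fin n => mem_iUnion.1 (hU.2.symm ▸ mem_univ (itr T θ i ω x))
    exact mem_iUnion.2 ⟨a, hx, mem_iInter.2 fun i => ⟨ha i, mapsTo_itr hmap i hx⟩⟩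

end Dynamics

theorem stmt1_general
    {Ω X : Type*} [MeasurableSpace Ω]
    (P : MeasureTheory.Measure Ω) [MeasureTheory.IsProbabilityMeasure P] [P.IsComplete]
    [MetricSpace X] [CompactSpace X] [MeasurableSpace X] [BorelSpace X]
    (θ : Ω → Ω) (hθ : MeasureTheory.MeasurePreserving θ P P)
    (E : Set (Ω × X)) (hE : MeasurableSet E)
    (hEcp : ∀ ω, IsCompact (fiber E ω))
    (T : Ω → X → X) (hTm : Measurable fun p : Ω × X => T p.1 p.2)
    (hTmap : ∀ᵐ ω ∂P, Set.MapsTo (T ω) (fiber E ω) (fiber E (θ ω)))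
    (hTc : ∀ᵐ ω ∂P, ContinuousOn (T ω) (fiber E ω))
    (n : ℕ) {l : ℕ} (U : Fin l → Set X) (hU : IsOpenCover U) :
    Measurable fun ω => DOn (fiber E ω) (dynCover T θ E U n ω) := by
  obtain ⟨B, hBc, -, hB⟩ := TopologicalSpace.exists_countable_basis X
  have : Countable B := hBc.to_subtype
  let W : ((Fin n → Fin l) → Finset B) → (Fin n → Fin l) → Set X :=
    fun F a => ⋃ s ∈ F a, (s : Set X)
  let R : ℕ → Set Ω := fun q => ⋃ F, {ω | fiber E ω ⊆ ⋃ a, W F a} ∩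
    {ω | fiber E ω ⊆ shrinkingSet (W F) (dynCover T θ E U n ω) q}
  have hW : ∀ F a, MeasurableSet (W F a) := fun F a =>
    (isOpen_biUnion fun s _ => hB.isOpen s.2).measurableSet
  have hR : ∀ q, MeasurableSet (R q) := fun q => .iUnion fun F =>
    (measurableSet_setOf_fiber_subset P hE (measurable_snd (.iUnion (hW F)))).inter
      (measurableSet_setOf_fiber_subset P hE (measurableSet_shrinkingSet (hW F)
        (measurableSet_dynCover hθ.measurable hTm hE fun i => (hU.1 i).measurableSet) q))
  have hcover : ∀ᵐ ω ∂P, IsOpenCoverOn (fiber E ω) (dynCover T θ E U n ω) := by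
    have h := fun i => (hθ.iterate i).quasiMeasurePreserving.ae (hTmap.and hTc)
    filter_upwards [ae_all_iff.2 h] with ω hω
    exact isOpenCoverOn_dynCover hU (fun i => (hω i).1) (fun i => (hω i).2) n
  refine measurable_of_Iic fun q =>
    ((hR q).nullMeasurableSet (μ := P)).congr ?_ |>.measurable_of_complete
  filter_upwards [hcover] with ω hω
  change (ω ∈ R q) = (_ ≤ q)
  simp only [R, mem_iUnion, mem_inter_iff, mem_ofPred_eq]
  exact propext (DOn_le_iff_exists_finset_basis (hEcp ω) hω hB).symm

theorem stmt1
    {Ω X : Type*} [MeasurableSpace Ω]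
    (P : MeasureTheory.Measure Ω) [MeasureTheory.IsProbabilityMeasure P] [P.IsComplete]
    [MetricSpace X] [CompactSpace X] [MeasurableSpace X] [BorelSpace X]
    (θ : Ω → Ω) (hθ : MeasureTheory.MeasurePreserving θ P P)
    (E : Set (Ω × X)) (hE : MeasurableSet E)
    (hEne : ∀ ω, (fiber E ω).Nonempty) (hEcp : ∀ ω, IsCompact (fiber E ω))
    (T : Ω → X → X) (hTm : Measurable fun p : Ω × X => T p.1 p.2)
    (hTmap : ∀ᵐ ω ∂P, Set.MapsTo (T ω) (fiber E ω) (fiber E (θ ω)))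
    (hTc : ∀ᵐ ω ∂P, ContinuousOn (T ω) (fiber E ω))
    (n : ℕ) {l : ℕ} (U : Fin l → Set X) (hU : IsOpenCover U) :
    Measurable fun ω => DOn (fiber E ω) (dynCover T θ E U n ω) :=
  stmt1_general P θ hθ E hE hEcp T hTm hTmap hTc n U hU
end

section
/- Let K be a normal topological space and let α and β be finite open covers of K. Then D(α∨β) ≤ D(α) + D(β), where α∨β = {A∩B : A∈α, B∈β}. -/
open MeasureTheory Set Filter Topology
open scoped ENNReal

section Stmt3Aux

private lemma stmt3_interval_unique {p : ℕ} (A B : Fin p → ℝ)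
    (hmono : ∀ k k' : Fin p, k < k' → B k ≤ A k') {c : ℝ} {k k' : Fin p}
    (h1 : A k < c) (h2 : c ≤ B k) (h3 : A k' < c) (h4 : c ≤ B k') : k = k' := by
  rcases lt_trichotomy k k' with h | h | h
  · have := hmono k k' h; linarith
  · exact h
  · have := hmono k' k h; linarith

private lemma stmt3_pou {K : Type*} [TopologicalSpace K] [NormalSpace K] {p : ℕ}
    (γ : Fin p → Set K) (hopen : ∀ i, IsOpen (γ i)) (hcover : (Set.univ : Set K) ⊆ ⋃ i, γ i) :
    ∃ φ : Fin p → K → ℝ, (∀ i, Continuous (φ i)) ∧ (∀ i x, 0 ≤ φ i x) ∧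
      (∀ x, ∑ i, φ i x = 1) ∧ (∀ i x, 0 < φ i x → x ∈ γ i) := by
  obtain ⟨f, hf⟩ := BumpCovering.exists_isSubordinate_of_locallyFinite isClosed_univ γ hopen
    (locallyFinite_of_finite γ) hcover
  have hf' := hf.toPartitionOfUnity
  set g := f.toPartitionOfUnity with hg
  refine ⟨fun i x => g i x, fun i => (g i).continuous, fun i x => g.nonneg i x,
    fun x => ?_, fun i x hx => ?_⟩
  · rw [← finsum_eq_sum_of_fintype]
    exact g.sum_eq_one (Set.mem_univ x)
  · exact hf' i (subset_tsupport _ (Function.mem_support.2 hx.ne'))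

private lemma stmt3_top {p : ℕ} (g : Fin p → ℝ) (hnn : ∀ i, 0 ≤ g i)
    (hsum : ∑ i, g i = 1) :
    ∃ k, 0 < g k ∧ ∑ i ∈ Finset.Iic k, g i = 1 := by
  classical
  set P := Finset.univ.filter (fun i => 0 < g i) with hP
  have hPne : P.Nonempty := by
    by_contra h
    rw [Finset.not_nonempty_iff_eq_empty] at h
    have hz : ∀ i, g i = 0 := by
      intro i
      by_contra hi
      have hpos : 0 < g i := lt_of_le_of_ne (hnn i) (Ne.symm hi)
      have : i ∈ P := by simp [hP, hpos]
      simp [h] at this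
    rw [Finset.sum_congr rfl (fun i _ => hz i)] at hsum
    simp at hsum
  refine ⟨P.max' hPne, ?_, ?_⟩
  · have := P.max'_mem hPne
    simp only [hP, Finset.mem_filter] at this
    exact this.2
  · rw [← hsum]
    apply Finset.sum_subset (Finset.subset_univ _)
    intro i _ hi
    by_contra hgi
    have hpos : 0 < g i := lt_of_le_of_ne (hnn i) (Ne.symm hgi)
    have hiP : i ∈ P := by simp [hP, hpos]
    have := P.le_max' i hiP
    simp only [Finset.mem_Iic] at hi
    exact hi this

end Stmt3Aux


theorem stmt3 {K : Type*} [TopologicalSpace K] [NormalSpace K]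
    {ι κ : Type*} [Fintype ι] [Fintype κ] (U : ι → Set K) (V : κ → Set K)
    (hU : IsOpenCover U) (hV : IsOpenCover V) :
    DOn (Set.univ : Set K) (fun p : ι × κ => U p.1 ∩ V p.2) ≤
      DOn Set.univ U + DOn Set.univ V := by
  classical
  set n1 := DOn (Set.univ : Set K) U with hn1
  set n2 := DOn (Set.univ : Set K) V with hn2
  -- realize DOn for U and V by optimal refinements γ, δ
  have hUne : {r | ∃ (m : ℕ) (W : Fin m → Set K), IsOpenCoverOn (Set.univ : Set K) W ∧
      Refines W U ∧ ordOn Set.univ W = r}.Nonempty := by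
    refine ⟨_, Fintype.card ι, U ∘ (Fintype.equivFin ι).symm,
      ⟨fun i => ⟨U _, hU.1 _, (Set.inter_univ _).symm⟩, ?_⟩,
      fun j => ⟨(Fintype.equivFin ι).symm j, subset_rfl⟩, rfl⟩
    intro x _
    have hx : x ∈ ⋃ i, U i := by rw [hU.2]; trivial
    obtain ⟨i, hi⟩ := Set.mem_iUnion.1 hx
    exact Set.mem_iUnion.2 ⟨Fintype.equivFin ι i, by simpa using hi⟩
  have hVne : {r | ∃ (m : ℕ) (W : Fin m → Set K), IsOpenCoverOn (Set.univ : Set K) W ∧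
      Refines W V ∧ ordOn Set.univ W = r}.Nonempty := by
    refine ⟨_, Fintype.card κ, V ∘ (Fintype.equivFin κ).symm,
      ⟨fun i => ⟨V _, hV.1 _, (Set.inter_univ _).symm⟩, ?_⟩,
      fun j => ⟨(Fintype.equivFin κ).symm j, subset_rfl⟩, rfl⟩
    intro x _
    have hx : x ∈ ⋃ i, V i := by rw [hV.2]; trivial
    obtain ⟨i, hi⟩ := Set.mem_iUnion.1 hx
    exact Set.mem_iUnion.2 ⟨Fintype.equivFin κ i, by simpa using hi⟩
  obtain ⟨p, γ, hγcov, hγref, hγord⟩ : ∃ (p : ℕ) (γ : Fin p → Set K),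
      IsOpenCoverOn (Set.univ : Set K) γ ∧ Refines γ U ∧ ordOn Set.univ γ = n1 :=
    Nat.sInf_mem hUne
  obtain ⟨q, δ, hδcov, hδref, hδord⟩ : ∃ (q : ℕ) (δ : Fin q → Set K),
      IsOpenCoverOn (Set.univ : Set K) δ ∧ Refines δ V ∧ ordOn Set.univ δ = n2 :=
    Nat.sInf_mem hVne
  have hγopen : ∀ i, IsOpen (γ i) := by
    intro i
    obtain ⟨W, hW, hEq⟩ := hγcov.1 i
    rw [Set.inter_univ] at hEq
    rwa [hEq]
  have hδopen : ∀ i, IsOpen (δ i) := by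
    intro i
    obtain ⟨W, hW, hEq⟩ := hδcov.1 i
    rw [Set.inter_univ] at hEq
    rwa [hEq]
  -- multiplicity bounds for γ and δ
  have hγmult : ∀ x : K, Nat.card {i // x ∈ γ i} ≤ n1 + 1 := by
    intro x
    have hb : BddAbove {m | ∃ x ∈ (Set.univ : Set K), m = Nat.card {i // x ∈ γ i}} := by
      refine ⟨p, fun a ha => ?_⟩
      obtain ⟨y, -, rfl⟩ := ha
      calc Nat.card {i // y ∈ γ i} ≤ Nat.card (Fin p) :=
            Nat.card_le_card_of_injective Subtype.val Subtype.val_injective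
        _ = p := by simp
    have h1 : Nat.card {i // x ∈ γ i} ≤ multOn Set.univ γ :=
      le_csSup hb ⟨x, Set.mem_univ x, rfl⟩
    have h2 : multOn Set.univ γ - 1 = n1 := hγord
    omega
  have hδmult : ∀ x : K, Nat.card {i // x ∈ δ i} ≤ n2 + 1 := by
    intro x
    have hb : BddAbove {m | ∃ x ∈ (Set.univ : Set K), m = Nat.card {i // x ∈ δ i}} := by
      refine ⟨q, fun a ha => ?_⟩
      obtain ⟨y, -, rfl⟩ := ha
      calc Nat.card {i // y ∈ δ i} ≤ Nat.card (Fin q) :=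
            Nat.card_le_card_of_injective Subtype.val Subtype.val_injective
        _ = q := by simp
    have h1 : Nat.card {i // x ∈ δ i} ≤ multOn Set.univ δ :=
      le_csSup hb ⟨x, Set.mem_univ x, rfl⟩
    have h2 : multOn Set.univ δ - 1 = n2 := hδord
    omega
  -- partitions of unity
  obtain ⟨φ, hφc, hφnn, hφsum, hφsupp⟩ := stmt3_pou γ hγopen hγcov.2
  obtain ⟨ψ, hψc, hψnn, hψsum, hψsupp⟩ := stmt3_pou δ hδopen hδcov.2
  -- cumulative sums
  set Aφ : Fin p → K → ℝ := fun k x => ∑ i ∈ Finset.Iio k, φ i x with hAφ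
  set Bφ : Fin p → K → ℝ := fun k x => ∑ i ∈ Finset.Iic k, φ i x with hBφ
  set Aψ : Fin q → K → ℝ := fun l x => ∑ i ∈ Finset.Iio l, ψ i x with hAψ
  set Bψ : Fin q → K → ℝ := fun l x => ∑ i ∈ Finset.Iic l, ψ i x with hBψ
  have hABφ : ∀ (k : Fin p) (x : K), Bφ k x = Aφ k x + φ k x := by
    intro k x
    rw [hBφ, hAφ]
    simp only
    rw [← Finset.Iio_insert, Finset.sum_insert (by simp)]
    ring
  have hABψ : ∀ (l : Fin q) (x : K), Bψ l x = Aψ l x + ψ l x := by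
    intro l x
    rw [hBψ, hAψ]
    simp only
    rw [← Finset.Iio_insert, Finset.sum_insert (by simp)]
    ring
  have hmonoφ : ∀ (x : K) (k k' : Fin p), k < k' → Bφ k x ≤ Aφ k' x := by
    intro x k k' h
    apply Finset.sum_le_sum_of_subset_of_nonneg
    · intro i hi
      simp only [Finset.mem_Iic] at hi
      simp only [Finset.mem_Iio]
      exact lt_of_le_of_lt hi h
    · intro i _ _
      exact hφnn i x
  have hmonoψ : ∀ (x : K) (l l' : Fin q), l < l' → Bψ l x ≤ Aψ l' x := by
    intro x l l' h
    apply Finset.sum_le_sum_of_subset_of_nonneg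
    · intro i hi
      simp only [Finset.mem_Iic] at hi
      simp only [Finset.mem_Iio]
      exact lt_of_le_of_lt hi h
    · intro i _ _
      exact hψnn i x
  -- the new cover
  set W : Fin p × Fin q → Set K :=
    fun j => {y | max (Aφ j.1 y) (Aψ j.2 y) < min (Bφ j.1 y) (Bψ j.2 y)} with hWdef
  have hWmem : ∀ (j : Fin p × Fin q) (y : K), y ∈ W j ↔
      max (Aφ j.1 y) (Aψ j.2 y) < min (Bφ j.1 y) (Bψ j.2 y) := by
    intro j y
    rw [hWdef]
    rfl
  have hWφpos : ∀ (j : Fin p × Fin q) (y : K), y ∈ W j → 0 < φ j.1 y := by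
    intro j y hy
    rw [hWmem] at hy
    have h1 : Aφ j.1 y ≤ max (Aφ j.1 y) (Aψ j.2 y) := le_max_left _ _
    have h2 : min (Bφ j.1 y) (Bψ j.2 y) ≤ Bφ j.1 y := min_le_left _ _
    have h3 := hABφ j.1 y
    linarith
  have hWψpos : ∀ (j : Fin p × Fin q) (y : K), y ∈ W j → 0 < ψ j.2 y := by
    intro j y hy
    rw [hWmem] at hy
    have h1 : Aψ j.2 y ≤ max (Aφ j.1 y) (Aψ j.2 y) := le_max_right _ _
    have h2 : min (Bφ j.1 y) (Bψ j.2 y) ≤ Bψ j.2 y := min_le_right _ _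
    have h3 := hABψ j.2 y
    linarith
  have hWopen : ∀ j, IsOpen (W j) := by
    intro j
    rw [hWdef]
    apply isOpen_lt
    · exact Continuous.max (continuous_finset_sum _ fun i _ => hφc i)
        (continuous_finset_sum _ fun i _ => hψc i)
    · exact Continuous.min (continuous_finset_sum _ fun i _ => hφc i)
        (continuous_finset_sum _ fun i _ => hψc i)
  have hWcov : (Set.univ : Set K) ⊆ ⋃ j, W j := by
    intro x _
    obtain ⟨k, hk, hk1⟩ := stmt3_top (fun i => φ i x) (fun i => hφnn i x) (hφsum x)
    obtain ⟨l, hl, hl1⟩ := stmt3_top (fun i => ψ i x) (fun i => hψnn i x) (hψsum x)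
    have hBk : Bφ k x = 1 := hk1
    have hBl : Bψ l x = 1 := hl1
    have hAk : Aφ k x < 1 := by have := hABφ k x; rw [hBk] at this; linarith
    have hAl : Aψ l x < 1 := by have := hABψ l x; rw [hBl] at this; linarith
    refine Set.mem_iUnion.2 ⟨(k, l), ?_⟩
    rw [hWmem]
    have h4 : min (Bφ k x) (Bψ l x) = 1 := by rw [hBk, hBl]; simp
    rw [h4]
    exact max_lt hAk hAl
  -- order bound
  have hcard : ∀ x : K, Nat.card {j : Fin p × Fin q // x ∈ W j} ≤ n1 + n2 + 1 := by
    intro x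
    have hNc : Nat.card {j : Fin p × Fin q // x ∈ W j} =
        (Finset.univ.filter (fun j : Fin p × Fin q => x ∈ W j)).card := by
      rw [Nat.card_eq_fintype_card, Fintype.card_subtype]
    rw [hNc]
    set P : Finset (Fin p) := Finset.univ.filter (fun k => 0 < φ k x) with hPdef
    set Q : Finset (Fin q) := Finset.univ.filter (fun l => 0 < ψ l x) with hQdef
    have hPcard : P.card ≤ n1 + 1 := by
      have h1 : P ⊆ Finset.univ.filter (fun k => x ∈ γ k) := by
        intro k hk
        simp only [hPdef, Finset.mem_filter, Finset.mem_univ, true_and] at hk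
        simp only [Finset.mem_filter, Finset.mem_univ, true_and]
        exact hφsupp k x hk
      have h2 : (Finset.univ.filter (fun k => x ∈ γ k)).card = Nat.card {i // x ∈ γ i} := by
        rw [Nat.card_eq_fintype_card, Fintype.card_subtype]
      calc P.card ≤ _ := Finset.card_le_card h1
        _ ≤ n1 + 1 := by rw [h2]; exact hγmult x
    have hQcard : Q.card ≤ n2 + 1 := by
      have h1 : Q ⊆ Finset.univ.filter (fun l => x ∈ δ l) := by
        intro l hl
        simp only [hQdef, Finset.mem_filter, Finset.mem_univ, true_and] at hl
        simp only [Finset.mem_filter, Finset.mem_univ, true_and]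
        exact hψsupp l x hl
      have h2 : (Finset.univ.filter (fun l => x ∈ δ l)).card = Nat.card {i // x ∈ δ i} := by
        rw [Nat.card_eq_fintype_card, Fintype.card_subtype]
      calc Q.card ≤ _ := Finset.card_le_card h1
        _ ≤ n2 + 1 := by rw [h2]; exact hδmult x
    set S : Finset ℝ := P.image (fun k => Bφ k x) with hSdef
    set T : Finset ℝ := Q.image (fun l => Bψ l x) with hTdef
    have hmaps : ∀ j ∈ Finset.univ.filter (fun j : Fin p × Fin q => x ∈ W j),
        min (Bφ j.1 x) (Bψ j.2 x) ∈ S ∪ T := by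
      intro j hj
      simp only [Finset.mem_filter, Finset.mem_univ, true_and] at hj
      have hk : j.1 ∈ P := by
        simp only [hPdef, Finset.mem_filter, Finset.mem_univ, true_and]
        exact hWφpos j x hj
      have hl : j.2 ∈ Q := by
        simp only [hQdef, Finset.mem_filter, Finset.mem_univ, true_and]
        exact hWψpos j x hj
      rcases min_cases (Bφ j.1 x) (Bψ j.2 x) with ⟨h, -⟩ | ⟨h, -⟩
      · exact Finset.mem_union_left _ (by rw [h]; exact Finset.mem_image_of_mem _ hk)
      · exact Finset.mem_union_right _ (by rw [h]; exact Finset.mem_image_of_mem _ hl)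
    have hinj : Set.InjOn (fun j : Fin p × Fin q => min (Bφ j.1 x) (Bψ j.2 x))
        (Finset.univ.filter (fun j : Fin p × Fin q => x ∈ W j)) := by
      intro j hj j' hj' heq
      simp only [Finset.coe_filter, Set.mem_setOf_eq, Finset.mem_univ, true_and] at hj hj'
      simp only at heq
      rw [hWmem] at hj hj'
      have hA1 : Aφ j.1 x < min (Bφ j.1 x) (Bψ j.2 x) :=
        lt_of_le_of_lt (le_max_left _ _) hj
      have hA2 : Aψ j.2 x < min (Bφ j.1 x) (Bψ j.2 x) :=
        lt_of_le_of_lt (le_max_right _ _) hj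
      have hB1 : min (Bφ j.1 x) (Bψ j.2 x) ≤ Bφ j.1 x := min_le_left _ _
      have hB2 : min (Bφ j.1 x) (Bψ j.2 x) ≤ Bψ j.2 x := min_le_right _ _
      have hA1' : Aφ j'.1 x < min (Bφ j'.1 x) (Bψ j'.2 x) :=
        lt_of_le_of_lt (le_max_left _ _) hj'
      have hA2' : Aψ j'.2 x < min (Bφ j'.1 x) (Bψ j'.2 x) :=
        lt_of_le_of_lt (le_max_right _ _) hj'
      have hB1' : min (Bφ j'.1 x) (Bψ j'.2 x) ≤ Bφ j'.1 x := min_le_left _ _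
      have hB2' : min (Bφ j'.1 x) (Bψ j'.2 x) ≤ Bψ j'.2 x := min_le_right _ _
      rw [← heq] at hA1' hB1' hA2' hB2'
      have e1 : j.1 = j'.1 :=
        stmt3_interval_unique (fun k => Aφ k x) (fun k => Bφ k x)
          (fun k k' h => hmonoφ x k k' h) hA1 hB1 hA1' hB1'
      have e2 : j.2 = j'.2 :=
        stmt3_interval_unique (fun l => Aψ l x) (fun l => Bψ l x)
          (fun l l' h => hmonoψ x l l' h) hA2 hB2 hA2' hB2'
      exact Prod.ext e1 e2
    have hle1 : (Finset.univ.filter (fun j : Fin p × Fin q => x ∈ W j)).card ≤ (S ∪ T).card :=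
      Finset.card_le_card_of_injOn _ hmaps hinj
    obtain ⟨k₀, hk₀, hk₀1⟩ := stmt3_top (fun i => φ i x) (fun i => hφnn i x) (hφsum x)
    obtain ⟨l₀, hl₀, hl₀1⟩ := stmt3_top (fun i => ψ i x) (fun i => hψnn i x) (hψsum x)
    have h1S : (1 : ℝ) ∈ S := by
      refine Finset.mem_image.2 ⟨k₀, ?_, hk₀1⟩
      simp only [hPdef, Finset.mem_filter, Finset.mem_univ, true_and]
      exact hk₀
    have h1T : (1 : ℝ) ∈ T := by
      refine Finset.mem_image.2 ⟨l₀, ?_, hl₀1⟩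
      simp only [hQdef, Finset.mem_filter, Finset.mem_univ, true_and]
      exact hl₀
    have hint : 1 ≤ (S ∩ T).card :=
      Finset.card_pos.2 ⟨1, Finset.mem_inter.2 ⟨h1S, h1T⟩⟩
    have huni := Finset.card_union_add_card_inter S T
    have hS : S.card ≤ n1 + 1 := le_trans (Finset.card_image_le) hPcard
    have hT : T.card ≤ n2 + 1 := le_trans (Finset.card_image_le) hQcard
    omega
  -- reindex to Fin (p * q)
  set e : Fin p × Fin q ≃ Fin (p * q) := finProdFinEquiv with he
  set W' : Fin (p * q) → Set K := fun j => W (e.symm j) with hW'def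
  have hW'cov : IsOpenCoverOn (Set.univ : Set K) W' := by
    constructor
    · intro i
      exact ⟨W (e.symm i), hWopen _, (Set.inter_univ _).symm⟩
    · intro x hx
      obtain ⟨j, hj⟩ := Set.mem_iUnion.1 (hWcov hx)
      refine Set.mem_iUnion.2 ⟨e j, ?_⟩
      rw [hW'def]
      simpa using hj
  have hW'ref : Refines W' (fun r : ι × κ => U r.1 ∩ V r.2) := by
    intro j
    obtain ⟨a, ha⟩ := hγref (e.symm j).1
    obtain ⟨b, hb⟩ := hδref (e.symm j).2
    refine ⟨(a, b), fun y hy => ?_⟩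
    rw [hW'def] at hy
    exact ⟨ha (hφsupp _ _ (hWφpos _ _ hy)), hb (hψsupp _ _ (hWψpos _ _ hy))⟩
  have hW'card : ∀ x : K, Nat.card {j : Fin (p * q) // x ∈ W' j} ≤ n1 + n2 + 1 := by
    intro x
    have hEq : Nat.card {j : Fin (p * q) // x ∈ W' j} =
        Nat.card {j : Fin p × Fin q // x ∈ W j} :=
      Nat.card_congr (Equiv.subtypeEquiv e.symm (fun j => Iff.rfl))
    rw [hEq]
    exact hcard x
  have hW'mult : multOn (Set.univ : Set K) W' ≤ n1 + n2 + 1 := by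
    have hall : ∀ a ∈ {m | ∃ x ∈ (Set.univ : Set K), m = Nat.card {j // x ∈ W' j}},
        a ≤ n1 + n2 + 1 := by
      rintro a ⟨x, -, rfl⟩
      exact hW'card x
    rcases Set.eq_empty_or_nonempty
        {m | ∃ x ∈ (Set.univ : Set K), m = Nat.card {j // x ∈ W' j}} with h0 | h0
    · rw [multOn, h0]
      simp
    · exact csSup_le h0 hall
  have hW'ord : ordOn (Set.univ : Set K) W' ≤ n1 + n2 := by
    have : ordOn (Set.univ : Set K) W' = multOn (Set.univ : Set K) W' - 1 := rfl
    omega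
  have hfinal : DOn (Set.univ : Set K) (fun r : ι × κ => U r.1 ∩ V r.2) ≤
      ordOn (Set.univ : Set K) W' :=
    Nat.sInf_le ⟨p * q, W', hW'cov, hW'ref, rfl⟩
  exact le_trans hfinal hW'ord
end

section
/- Let X be a compact topological space, Y a Hausdorff topological space, α a finite open cover of X, and f: X → Y a continuous map such that for every y ∈ Y the fiber f^{-1}{y} is contained in some element U ∈ α. Then f is α-compatible. -/
open MeasureTheory Set Filter Topology
open scoped ENNReal

theorem stmt4 {X Y : Type*} [TopologicalSpace X] [CompactSpace X]
    [TopologicalSpace Y] [T2Space Y]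
    {ι : Type*} [Fintype ι] (U : ι → Set X) (hU : IsOpenCover U)
    (f : X → Y) (hf : Continuous f) (hfib : ∀ y : Y, ∃ i, f ⁻¹' {y} ⊆ U i) :
    Compatible U f := by
  classical
  rcases isEmpty_or_nonempty Y with hY | hY
  · refine ⟨0, fun j => ∅, ⟨fun j => isOpen_empty, ?_⟩, fun j => j.elim0⟩
    exact Subsingleton.elim _ _
  · obtain ⟨y₀⟩ := hY
    obtain ⟨i₀, -⟩ := hfib y₀
    have hclosed : IsClosedMap f := hf.isClosedMap
    set V : ι → Set Y := fun i => (f '' (U i)ᶜ)ᶜ with hV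
    have hVopen : ∀ i, IsOpen (V i) := fun i =>
      (hclosed _ (hU.1 i).isClosed_compl).isOpen_compl
    have hpre : ∀ i, f ⁻¹' V i ⊆ U i := by
      intro i x hx
      by_contra hxU
      exact hx ⟨x, hxU, rfl⟩
    have hcover : range f ⊆ ⋃ i, V i := by
      rintro _ ⟨x, rfl⟩
      obtain ⟨i, hi⟩ := hfib (f x)
      refine mem_iUnion.mpr ⟨i, ?_⟩
      rintro ⟨x', hx', hfx'⟩
      exact hx' (hi hfx')
    obtain ⟨t, ht⟩ := (isCompact_range hf).elim_finite_subcover V hVopen hcover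
    let W0 : Option {i // i ∈ t} → Set Y := fun o => o.elim (range f)ᶜ (fun i => V i)
    have hW0open : ∀ o, IsOpen (W0 o) := by
      rintro (_ | ⟨i, hi⟩)
      · exact (isCompact_range hf).isClosed.isOpen_compl
      · exact hVopen i
    have hW0cover : ⋃ o, W0 o = univ := by
      ext y; simp only [mem_iUnion, mem_univ, iff_true]
      by_cases hy : y ∈ range f
      · obtain ⟨i, hi, hyi⟩ := mem_iUnion₂.mp (ht hy)
        exact ⟨some ⟨i, hi⟩, hyi⟩
      · exact ⟨none, hy⟩
    let e := (Fintype.equivFin (Option {i // i ∈ t})).symm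
    refine ⟨Fintype.card (Option {i // i ∈ t}), fun j => W0 (e j),
      ⟨fun j => hW0open _, ?_⟩, ?_⟩
    · rw [e.surjective.iUnion_comp (fun o => W0 o)]
      exact hW0cover
    · intro j
      cases h : e j with
      | none =>
        refine ⟨i₀, ?_⟩
        intro x hx
        simp only at hx
        rw [h] at hx
        exact absurd ⟨x, rfl⟩ hx
      | some i =>
        refine ⟨i, ?_⟩
        intro x hx
        simp only at hx
        rw [h] at hx
        exact hpre i hx
end

section
/- Let X be a topological space, α a finite open cover of X, Y a topological space and f: X → Y an α-compatible continuous map. Then D(α) ≤ dim Y, where dim Y denotes the covering dimension of Y. -/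
open MeasureTheory Set Filter Topology
open scoped ENNReal

theorem stmt5 {X Y : Type*} [TopologicalSpace X] [TopologicalSpace Y]
    {ι : Type*} [Fintype ι] (U : ι → Set X) (hU : IsOpenCover U)
    (f : X → Y) (hf : Continuous f) (hcomp : Compatible U f) :
    (DOn (Set.univ : Set X) U : ℕ∞) ≤ covDim Y := by
  obtain ⟨m, W, hW, href⟩ := hcomp
  -- the defining set for `DOn univ W` is nonempty
  have hWcovOn : IsOpenCoverOn (Set.univ : Set Y) W := by
    refine ⟨fun i => ⟨W i, hW.1 i, by simp⟩, ?_⟩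
    rw [hW.2]
  have hSne : {q | ∃ (k : ℕ) (V : Fin k → Set Y),
      IsOpenCoverOn (Set.univ : Set Y) V ∧ Refines V W ∧ ordOn (Set.univ : Set Y) V = q}.Nonempty :=
    ⟨_, m, W, hWcovOn, fun j => ⟨j, subset_rfl⟩, rfl⟩
  obtain ⟨k, V, hVcov, hVref, hVord⟩ := Nat.sInf_mem hSne
  -- the pullback cover
  set V' : Fin k → Set X := fun j => f ⁻¹' V j with hV'
  have hV'cov : IsOpenCoverOn (Set.univ : Set X) V' := by
    constructor
    · intro i
      obtain ⟨O, hO, hOV⟩ := hVcov.1 i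
      exact ⟨f ⁻¹' O, hO.preimage hf, by simp [hV', hOV]⟩
    · intro x _
      have : f x ∈ ⋃ i, V i := hVcov.2 (mem_univ _)
      obtain ⟨i, hi⟩ := mem_iUnion.mp this
      exact mem_iUnion.mpr ⟨i, hi⟩
  have hV'ref : Refines V' U := by
    intro j
    obtain ⟨i, hi⟩ := hVref j
    obtain ⟨i', hi'⟩ := href i
    exact ⟨i', fun x hx => hi' (hi hx)⟩
  -- multiplicity of the pullback is at most that of V
  have hmult : multOn (Set.univ : Set X) V' ≤ multOn (Set.univ : Set Y) V := by
    apply csSup_le'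
    rintro q ⟨x, -, rfl⟩
    refine le_csSup ⟨k, ?_⟩ ⟨f x, mem_univ _, rfl⟩
    rintro n ⟨y, -, rfl⟩
    classical
    calc Nat.card {i // y ∈ V i} = Fintype.card {i // y ∈ V i} :=
          Nat.card_eq_fintype_card
      _ ≤ Fintype.card (Fin k) := Fintype.card_subtype_le _
      _ = k := by simp
  have hord : ordOn (Set.univ : Set X) V' ≤ ordOn (Set.univ : Set Y) V :=
    Nat.sub_le_sub_right hmult 1
  have h1 : DOn (Set.univ : Set X) U ≤ ordOn (Set.univ : Set Y) V := by
    refine le_trans (Nat.sInf_le ⟨k, V', hV'cov, hV'ref, rfl⟩) hord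
  rw [hVord] at h1
  -- DOn univ W ≤ covDim Y
  calc (DOn (Set.univ : Set X) U : ℕ∞) ≤ (DOn (Set.univ : Set Y) W : ℕ∞) := by
        exact_mod_cast h1
    _ ≤ covDim Y := by
        refine le_iSup_of_le m ?_
        refine le_iSup_of_le W ?_
        exact le_iSup (fun _ : IsOpenCover W => ((DOn (Set.univ : Set Y) W : ℕ∞))) hW
end

section
/- Under the Setup, let E′ ⊆ X be a closed set, b_n(ω) = sup_{x∈E_ω} Σ_{i=0}^{n-1} 1_{E′}(T^i_ω x), and let μ be any Θ-invariant probability measure on Ω×X with marginal P on Ω and μ(E) = 1. Then for every n ≥ 1, μ(Ω×E′) ≤ (1/n) ∫_Ω b_n(ω) dP(ω). -/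
open MeasureTheory Set Filter Topology
open scoped ENNReal

theorem stmt15
    {Ω X : Type*} [MeasurableSpace Ω]
    (P : MeasureTheory.Measure Ω) [MeasureTheory.IsProbabilityMeasure P] [P.IsComplete]
    [MetricSpace X] [CompactSpace X] [MeasurableSpace X] [BorelSpace X]
    (θ : Ω → Ω) (hθ : MeasureTheory.MeasurePreserving θ P P)
    (E : Set (Ω × X)) (hE : MeasurableSet E)
    (hEne : ∀ ω, (fiber E ω).Nonempty) (hEcp : ∀ ω, IsCompact (fiber E ω))
    (T : Ω → X → X) (hTm : Measurable fun p : Ω × X => T p.1 p.2)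
    (hTmap : ∀ᵐ ω ∂P, Set.MapsTo (T ω) (fiber E ω) (fiber E (θ ω)))
    (hTc : ∀ᵐ ω ∂P, ContinuousOn (T ω) (fiber E ω))
    (E' : Set X) (hE' : IsClosed E')
    (μ : MeasureTheory.Measure (Ω × X)) [MeasureTheory.IsProbabilityMeasure μ]
    (hμP : μ.map Prod.fst = P) (hμE : μ E = 1)
    (hμinv : μ.map (fun p : Ω × X => (θ p.1, T p.1 p.2)) = μ) :
    ∀ n : ℕ, 1 ≤ n →
      μ (Set.univ ×ˢ E') ≤ (∫⁻ ω, (bsup T θ E E' n ω : ℝ≥0∞) ∂P) / (n : ℝ≥0∞) := by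
  intro n hn
  classical
  haveI : Nonempty X := by
    by_contra h
    rw [not_nonempty_iff] at h
    have h0 : μ (Set.univ : Set (Ω × X)) = 0 := by
      have huniv : (Set.univ : Set (Ω × X)) = ∅ := by
        rw [Set.univ_eq_empty_iff, isEmpty_prod]
        exact Or.inr h
      simp [huniv]
    simp [measure_univ] at h0
  set Φ : Ω × X → Ω × X := fun p => (θ p.1, T p.1 p.2) with hΦ
  have hΦm : Measurable Φ := (hθ.measurable.comp measurable_fst).prodMk hTm
  have hmapiter : ∀ i : ℕ, μ.map (Φ^[i]) = μ := by
    intro i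
    induction i with
    | zero => simp
    | succ i ih =>
      rw [Function.iterate_succ', ← MeasureTheory.Measure.map_map hΦm (hΦm.iterate i), ih]
      exact hμinv
  have hitr : ∀ (i : ℕ) (ω : Ω) (x : X), Φ^[i] (ω, x) = (θ^[i] ω, itr T θ i ω x) := by
    intro i
    induction i with
    | zero => intro ω x; rfl
    | succ i ih =>
      intro ω x
      have h1 : Φ^[i + 1] (ω, x) = Φ^[i] (θ ω, T ω x) := Function.iterate_succ_apply Φ i (ω, x)
      rw [h1, ih (θ ω) (T ω x)]
      simp [Function.iterate_succ_apply, itr]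
  have hFm : ∀ i : ℕ, Measurable fun p : Ω × X => itr T θ i p.1 p.2 := by
    intro i
    have heq : (fun p : Ω × X => itr T θ i p.1 p.2) = fun p => (Φ^[i] p).2 := by
      funext p
      have h := congrArg Prod.snd (hitr i p.1 p.2)
      simpa using h.symm
    rw [heq]
    exact measurable_snd.comp (hΦm.iterate i)
  have hE'm : MeasurableSet E' := hE'.measurableSet
  have hmeas_i : ∀ i : ℕ, μ {p : Ω × X | itr T θ i p.1 p.2 ∈ E'} = μ (Set.univ ×ˢ E') := by
    intro i
    have hpre : Φ^[i] ⁻¹' (Set.univ ×ˢ E') = {p : Ω × X | itr T θ i p.1 p.2 ∈ E'} := by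
      ext p
      have h := congrArg Prod.snd (hitr i p.1 p.2)
      simp only [Set.mem_preimage, Set.mem_prod, Set.mem_univ, true_and, Set.mem_setOf_eq]
      rw [show Φ^[i] p = Φ^[i] (p.1, p.2) from rfl, hitr i p.1 p.2]
    rw [← hpre, ← MeasureTheory.Measure.map_apply (hΦm.iterate i)
      (MeasurableSet.univ.prod hE'm), hmapiter i]
  -- orbCount as a finite sum of indicators
  have horb : ∀ (ω : Ω) (x : X), (orbCount T θ E' n ω x : ℝ≥0∞)
      = ∑ i : Fin n, if itr T θ (i : ℕ) ω x ∈ E' then (1 : ℝ≥0∞) else 0 := by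
    intro ω x
    rw [orbCount, Nat.card_eq_fintype_card, Fintype.card_subtype, Finset.card_filter]
    push_cast
    simp
  have hmite : ∀ i : Fin n, Measurable
      (fun p : Ω × X => if itr T θ (i : ℕ) p.1 p.2 ∈ E' then (1 : ℝ≥0∞) else 0) := by
    intro i
    exact Measurable.ite ((hFm (i : ℕ)) hE'm) measurable_const measurable_const
  have horbm : Measurable fun p : Ω × X => (orbCount T θ E' n p.1 p.2 : ℝ≥0∞) := by
    have heq : (fun p : Ω × X => (orbCount T θ E' n p.1 p.2 : ℝ≥0∞))
        = fun p : Ω × X => ∑ i : Fin n, if itr T θ (i : ℕ) p.1 p.2 ∈ E' then (1 : ℝ≥0∞) else 0 := by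
      funext p; exact horb p.1 p.2
    rw [heq]
    refine Finset.measurable_sum _ ?_
    intro i _
    exact hmite i
  -- the integral of orbCount equals n * μ (univ ×ˢ E')
  have hsum : ∫⁻ p : Ω × X, (orbCount T θ E' n p.1 p.2 : ℝ≥0∞) ∂μ
      = n * μ (Set.univ ×ˢ E') := by
    have heq : (fun p : Ω × X => (orbCount T θ E' n p.1 p.2 : ℝ≥0∞))
        = fun p : Ω × X => ∑ i : Fin n, if itr T θ (i : ℕ) p.1 p.2 ∈ E' then (1 : ℝ≥0∞) else 0 := by
      funext p; exact horb p.1 p.2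
    rw [heq, MeasureTheory.lintegral_finset_sum _ (fun i _ => hmite i)]
    have hone : ∀ i : Fin n,
        (∫⁻ p : Ω × X, (if itr T θ (i : ℕ) p.1 p.2 ∈ E' then (1 : ℝ≥0∞) else 0) ∂μ)
          = μ (Set.univ ×ˢ E') := by
      intro i
      rw [← hmeas_i i]
      have hset : MeasurableSet {p : Ω × X | itr T θ (i : ℕ) p.1 p.2 ∈ E'} :=
        (hFm (i : ℕ)) hE'm
      rw [← MeasureTheory.lintegral_indicator_one hset]
      simp [Set.indicator_apply]
    simp_rw [hone]
    simp [Finset.sum_const, Finset.card_univ, nsmul_eq_mul]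
  -- bound orbCount by bsup on the fiber
  have horb_le : ∀ (ω : Ω) (x : X), x ∈ fiber E ω →
      orbCount T θ E' n ω x ≤ bsup T θ E E' n ω := by
    intro ω x hx
    have hbdd : BddAbove {m | ∃ x ∈ fiber E ω, m = orbCount T θ E' n ω x} := by
      refine ⟨n, ?_⟩
      rintro m ⟨y, hy, rfl⟩
      rw [orbCount, Nat.card_eq_fintype_card]
      calc Fintype.card {i : Fin n // itr T θ (i : ℕ) ω y ∈ E'}
          ≤ Fintype.card (Fin n) := Fintype.card_subtype_le _
        _ = n := Fintype.card_fin n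
    exact le_csSup hbdd ⟨x, hx, rfl⟩
  have hfst : μ.fst = P := hμP
  -- a.e. ω the conditional kernel gives full mass to the fiber
  have hEc : μ Eᶜ = 0 := by
    rw [measure_compl hE (measure_ne_top μ E), hμE, measure_univ]
    simp
  have hEomega : ∀ᵐ ω ∂P, μ.condKernel ω {x | (ω, x) ∈ Eᶜ} = 0 := by
    have h0 : ∫⁻ ω, μ.condKernel ω {x | (ω, x) ∈ Eᶜ} ∂P = 0 := by
      rw [← hfst, MeasureTheory.Measure.lintegral_condKernel_mem hE.compl, hEc]
    have hm : Measurable fun ω => μ.condKernel ω {x | (ω, x) ∈ Eᶜ} :=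
      ProbabilityTheory.Kernel.measurable_kernel_prodMk_left hE.compl
    exact (MeasureTheory.lintegral_eq_zero_iff hm).mp h0
  -- key inequality
  have key : ∫⁻ p : Ω × X, (orbCount T θ E' n p.1 p.2 : ℝ≥0∞) ∂μ
      ≤ ∫⁻ ω, (bsup T θ E E' n ω : ℝ≥0∞) ∂P := by
    rw [← MeasureTheory.Measure.lintegral_condKernel horbm, hfst]
    refine MeasureTheory.lintegral_mono_ae ?_
    filter_upwards [hEomega] with ω hω
    have hae : ∀ᵐ x ∂(μ.condKernel ω), x ∈ fiber E ω := by
      rw [MeasureTheory.ae_iff]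
      exact hω
    calc ∫⁻ x, (orbCount T θ E' n ω x : ℝ≥0∞) ∂(μ.condKernel ω)
        ≤ ∫⁻ _x, (bsup T θ E E' n ω : ℝ≥0∞) ∂(μ.condKernel ω) := by
          refine MeasureTheory.lintegral_mono_ae ?_
          filter_upwards [hae] with x hx
          exact_mod_cast Nat.cast_le.mpr (horb_le ω x hx)
      _ = (bsup T θ E E' n ω : ℝ≥0∞) := by
          simp [MeasureTheory.lintegral_const, measure_univ]
  -- conclude
  have hn0 : (n : ℝ≥0∞) ≠ 0 := by
    exact_mod_cast Nat.one_le_iff_ne_zero.mp hn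
  rw [ENNReal.le_div_iff_mul_le (Or.inl hn0) (Or.inl (ENNReal.natCast_ne_top n))]
  calc μ (Set.univ ×ˢ E') * n = n * μ (Set.univ ×ˢ E') := mul_comm _ _
    _ = ∫⁻ p : Ω × X, (orbCount T θ E' n p.1 p.2 : ℝ≥0∞) ∂μ := hsum.symm
    _ ≤ ∫⁻ ω, (bsup T θ E E' n ω : ℝ≥0∞) ∂P := key
end

section
/- Under the Setup, suppose T has the small boundary property. Then for every finite open cover α = {U_1,…,U_k} of X and every ε > 0, for P-a.a. ω there exists N_0(ω,ε) > 0 such that for every N > N_0(ω,ε) there exist continuous functions φ_1,…,φ_k : X → [0,1] with Σ_{j=1}^k φ_j ≡ 1 on X, φ_j vanishing outside U_j for each j, and such that, setting A = ⋃_{j=1}^k φ_j^{-1}((0,1)), one has (1/N) Σ_{i=0}^{N-1} 1_A(T^i_ω x) < ε for all x ∈ E_ω. -/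
open MeasureTheory Set Filter Topology
open scoped ENNReal

section Helpers

open Metric

variable {Ω X : Type*}

private lemma card_subtype_mono {N : ℕ} {p q : Fin N → Prop} (h : ∀ i, p i → q i) :
    Nat.card {i // p i} ≤ Nat.card {i // q i} :=
  Nat.card_le_card_of_injective (fun a => ⟨a.1, h _ a.2⟩) (by
    intro a b hab
    simp only [Subtype.mk.injEq] at hab
    exact Subtype.ext hab)

lemma orbCount_mono {T : Ω → X → X} {θ : Ω → Ω} {A A' : Set X} (h : A ⊆ A')
    (N : ℕ) (ω : Ω) (x : X) : orbCount T θ A N ω x ≤ orbCount T θ A' N ω x :=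
  card_subtype_mono (fun _ hi => h hi)

lemma orbCount_le {T : Ω → X → X} {θ : Ω → Ω} (A : Set X) (N : ℕ) (ω : Ω) (x : X) :
    orbCount T θ A N ω x ≤ N := by
  calc orbCount T θ A N ω x ≤ Nat.card (Fin N) :=
        Nat.card_le_card_of_injective (fun a => a.1) (fun a b hab => Subtype.ext hab)
    _ = N := by simp

lemma orbCount_empty {T : Ω → X → X} {θ : Ω → Ω} (N : ℕ) (ω : Ω) (x : X) :
    orbCount T θ (∅ : Set X) N ω x = 0 := by
  have : IsEmpty {i : Fin N // itr T θ (i : ℕ) ω x ∈ (∅ : Set X)} := ⟨fun a => a.2⟩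
  exact Nat.card_of_isEmpty

lemma orbCount_union_le (T : Ω → X → X) (θ : Ω → Ω) (A B : Set X) (N : ℕ) (ω : Ω) (x : X) :
    orbCount T θ (A ∪ B) N ω x ≤ orbCount T θ A N ω x + orbCount T θ B N ω x := by
  classical
  unfold orbCount
  rw [← Nat.card_sum]
  apply Nat.card_le_card_of_injective
    (f := fun a : {i : Fin N // itr T θ (i : ℕ) ω x ∈ A ∪ B} =>
      if h : itr T θ (a.1 : ℕ) ω x ∈ A then Sum.inl ⟨a.1, h⟩
      else Sum.inr ⟨a.1, a.2.resolve_left h⟩)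
  intro a b hab
  dsimp only at hab
  by_cases h1 : itr T θ (a.1 : ℕ) ω x ∈ A <;>
    by_cases h2 : itr T θ (b.1 : ℕ) ω x ∈ A
  · rw [dif_pos h1, dif_pos h2] at hab
    simp only [Sum.inl.injEq, Subtype.mk.injEq] at hab
    exact Subtype.ext hab
  · rw [dif_pos h1, dif_neg h2] at hab
    exact absurd hab (by simp)
  · rw [dif_neg h1, dif_pos h2] at hab
    exact absurd hab (by simp)
  · rw [dif_neg h1, dif_neg h2] at hab
    simp only [Sum.inr.injEq, Subtype.mk.injEq] at hab
    exact Subtype.ext hab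

lemma orbCount_biUnion_le {ι : Type*} [DecidableEq ι] (T : Ω → X → X) (θ : Ω → Ω)
    (A : ι → Set X) (s : Finset ι) (N : ℕ) (ω : Ω) (x : X) :
    orbCount T θ (⋃ l ∈ s, A l) N ω x ≤ ∑ l ∈ s, orbCount T θ (A l) N ω x := by
  classical
  induction s using Finset.cons_induction with
  | empty => simp [orbCount_empty]
  | cons a s' ha ih =>
      rw [Finset.sum_cons]
      have h1 : (⋃ l ∈ Finset.cons a s' ha, A l) = A a ∪ ⋃ l ∈ s', A l := by
        simp [Set.iUnion_or, Set.iUnion_union_distrib]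
      rw [h1]
      exact le_trans (orbCount_union_le T θ _ _ N ω x) (by gcongr)

lemma bsup_le {T : Ω → X → X} {θ : Ω → Ω} {E : Set (Ω × X)} (A : Set X) (n : ℕ) (ω : Ω) :
    bsup T θ E A n ω ≤ n := by
  apply csSup_le'
  rintro m ⟨x, _, rfl⟩
  exact orbCount_le A n ω x

lemma le_bsup {T : Ω → X → X} {θ : Ω → Ω} {E : Set (Ω × X)} {A : Set X} {N : ℕ} {ω : Ω}
    {x : X} (hx : x ∈ fiber E ω) : orbCount T θ A N ω x ≤ bsup T θ E A N ω := by
  apply le_csSup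
  · exact ⟨N, by rintro m ⟨y, _, rfl⟩; exact orbCount_le A N ω y⟩
  · exact ⟨x, hx, rfl⟩

lemma eventually_of_ocap_zero {T : Ω → X → X} {θ : Ω → Ω} {E : Set (Ω × X)} {A : Set X}
    {ω : Ω} (h : ocap T θ E A ω = 0) {c : ℝ} (hc : 0 < c) :
    ∀ᶠ n : ℕ in Filter.atTop, (bsup T θ E A n ω : ℝ) / n < c := by
  have hb : Filter.IsBoundedUnder (· ≤ ·) Filter.atTop
      (fun n : ℕ => (bsup T θ E A n ω : ℝ) / n) := by
    refine Filter.isBoundedUnder_of ⟨1, fun n => ?_⟩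
    rcases Nat.eq_zero_or_pos n with rfl | hn
    · simp
    · rw [div_le_one (by exact_mod_cast hn)]
      exact_mod_cast bsup_le A n ω
  have hlt : Filter.limsup (fun n : ℕ => (bsup T θ E A n ω : ℝ) / n) Filter.atTop < c := by
    unfold ocap at h
    rw [h]; exact hc
  exact Filter.eventually_lt_of_limsup_lt hlt hb

section TopX

variable [TopologicalSpace X]

/-- The set of `ω` all of whose forward iterates behave well. -/
def Good (T : Ω → X → X) (θ : Ω → Ω) (E : Set (Ω × X)) : Set Ω :=
  {ω | ∀ n : ℕ, Set.MapsTo (T (θ^[n] ω)) (fiber E (θ^[n] ω)) (fiber E (θ^[n + 1] ω)) ∧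
    ContinuousOn (T (θ^[n] ω)) (fiber E (θ^[n] ω))}

lemma Good.shift {T : Ω → X → X} {θ : Ω → Ω} {E : Set (Ω × X)} {ω : Ω}
    (h : ω ∈ Good T θ E) : θ ω ∈ Good T θ E := by
  intro n
  have h1 := h (n + 1)
  rw [Function.iterate_succ_apply θ (n + 1) ω, Function.iterate_succ_apply θ n ω] at h1
  exact h1

lemma itr_mapsTo {T : Ω → X → X} {θ : Ω → Ω} {E : Set (Ω × X)} :
    ∀ (i : ℕ) (ω : Ω), ω ∈ Good T θ E →
      Set.MapsTo (itr T θ i ω) (fiber E ω) (fiber E (θ^[i] ω))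
  | 0, ω, _ => by simpa [itr] using Set.mapsTo_id _
  | (i + 1), ω, h => by
      have h0 : Set.MapsTo (T ω) (fiber E ω) (fiber E (θ ω)) := by
        simpa using (h 0).1
      have hrec := itr_mapsTo i (θ ω) (Good.shift h)
      rw [show itr T θ (i + 1) ω = itr T θ i (θ ω) ∘ T ω from rfl,
        Function.iterate_succ_apply]
      exact hrec.comp h0

lemma itr_continuousOn {T : Ω → X → X} {θ : Ω → Ω} {E : Set (Ω × X)} :
    ∀ (i : ℕ) (ω : Ω), ω ∈ Good T θ E → ContinuousOn (itr T θ i ω) (fiber E ω)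
  | 0, ω, _ => by simpa [itr] using continuousOn_id
  | (i + 1), ω, h => by
      have h0 : Set.MapsTo (T ω) (fiber E ω) (fiber E (θ ω)) := by
        simpa using (h 0).1
      have hc0 : ContinuousOn (T ω) (fiber E ω) := by simpa using (h 0).2
      have hrec := itr_continuousOn i (θ ω) (Good.shift h)
      rw [show itr T θ (i + 1) ω = itr T θ i (θ ω) ∘ T ω from rfl]
      exact hrec.comp hc0 h0

lemma good_ae {mΩ : MeasurableSpace Ω} {P : MeasureTheory.Measure Ω}
    {T : Ω → X → X} {θ : Ω → Ω} {E : Set (Ω × X)}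
    (hθ : MeasureTheory.MeasurePreserving θ P P)
    (hTmap : ∀ᵐ ω ∂P, Set.MapsTo (T ω) (fiber E ω) (fiber E (θ ω)))
    (hTc : ∀ᵐ ω ∂P, ContinuousOn (T ω) (fiber E ω)) :
    ∀ᵐ ω ∂P, ω ∈ Good T θ E := by
  have h1 : ∀ n : ℕ, ∀ᵐ ω ∂P,
      Set.MapsTo (T (θ^[n] ω)) (fiber E (θ^[n] ω)) (fiber E (θ (θ^[n] ω))) ∧
      ContinuousOn (T (θ^[n] ω)) (fiber E (θ^[n] ω)) :=
    fun n => (hθ.iterate n).quasiMeasurePreserving.ae (hTmap.and hTc)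
  filter_upwards [MeasureTheory.ae_all_iff.2 h1] with ω hω n
  have h2 := hω n
  rw [Function.iterate_succ_apply' θ n ω]
  exact h2

end TopX

section MetricX

variable [MetricSpace X]

lemma exists_thickening_orbCount_le [CompactSpace X]
    {T : Ω → X → X} {θ : Ω → Ω} {E : Set (Ω × X)} {ω : Ω}
    (hEcp : IsCompact (fiber E ω)) (hω : ω ∈ Good T θ E)
    (B : Set X) (hB : IsClosed B) (N M : ℕ)
    (hM : ∀ y ∈ fiber E ω, orbCount T θ B N ω y ≤ M) :
    ∃ δ : ℝ, 0 < δ ∧ ∀ x ∈ fiber E ω,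
      orbCount T θ (Metric.thickening δ B) N ω x ≤ M := by
  classical
  rcases B.eq_empty_or_nonempty with rfl | hBne
  · exact ⟨1, one_pos, fun x _ => by
      simpa [Metric.thickening_empty, orbCount_empty] using Nat.zero_le M⟩
  by_contra hcon
  push_neg at hcon
  choose! x hxmem hxcount using fun p : ℕ =>
    hcon (1 / ((p : ℝ) + 1)) (by positivity)
  set Fp : ℕ → Finset (Fin N) := fun p =>
    Finset.univ.filter
      (fun i : Fin N => itr T θ (i : ℕ) ω (x p) ∈ Metric.thickening (1 / ((p : ℝ) + 1)) B)
    with hFp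
  have hFcard : ∀ p, M < (Fp p).card := by
    intro p
    have hcard : (Fp p).card
        = orbCount T θ (Metric.thickening (1 / ((p : ℝ) + 1)) B) N ω (x p) := by
      rw [hFp]
      unfold orbCount
      rw [Nat.card_eq_fintype_card]
      exact (Fintype.card_subtype _).symm
    rw [hcard]
    exact hxcount p
  obtain ⟨F, hFinf⟩ := Finite.exists_infinite_fiber Fp
  have hI : (Fp ⁻¹' {F}).Infinite := Set.infinite_coe_iff.mp hFinf
  let e : ℕ ↪ (Fp ⁻¹' {F}) := hI.natEmbedding
  let g : ℕ → ℕ := fun q => (e q : ℕ)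
  have hg_inj : Function.Injective g := fun a b hab => e.injective (Subtype.ext hab)
  have hg_top : Filter.Tendsto g Filter.atTop Filter.atTop := hg_inj.nat_tendsto_atTop
  have hgF : ∀ q, Fp (g q) = F := fun q => (e q).2
  obtain ⟨y, hy, s, hs_mono, hs_tendsto⟩ := hEcp.tendsto_subseq (fun q => hxmem (g q))
  have hyB : ∀ i ∈ F, itr T θ (i : ℕ) ω y ∈ B := by
    intro i hiF
    have hcont : ContinuousWithinAt (itr T θ (i : ℕ) ω) (fiber E ω) y :=
      (itr_continuousOn (i : ℕ) ω hω) y hy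
    have htend : Filter.Tendsto (fun q => itr T θ (i : ℕ) ω (x (g (s q)))) Filter.atTop
        (nhds (itr T θ (i : ℕ) ω y)) := by
      apply hcont.tendsto.comp
      apply tendsto_nhdsWithin_of_tendsto_nhds_of_eventually_within _ hs_tendsto
      exact Filter.Eventually.of_forall fun q => hxmem (g (s q))
    have hdist : Filter.Tendsto
        (fun q => Metric.infDist (itr T θ (i : ℕ) ω (x (g (s q)))) B) Filter.atTop
        (nhds (Metric.infDist (itr T θ (i : ℕ) ω y) B)) :=
      ((Metric.continuous_infDist_pt B).tendsto _).comp htend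
    have h0 : Filter.Tendsto (fun q : ℕ => 1 / ((g (s q) : ℝ) + 1)) Filter.atTop (nhds 0) :=
      tendsto_one_div_add_atTop_nhds_zero_nat.comp (hg_top.comp hs_mono.tendsto_atTop)
    have hle : Metric.infDist (itr T θ (i : ℕ) ω y) B ≤ 0 := by
      refine le_of_tendsto_of_tendsto' hdist h0 fun q => ?_
      have hmem : itr T θ (i : ℕ) ω (x (g (s q)))
          ∈ Metric.thickening (1 / ((g (s q) : ℝ) + 1)) B := by
        have h3 : i ∈ Fp (g (s q)) := by rw [hgF (s q)]; exact hiF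
        rw [hFp] at h3
        simpa using (Finset.mem_filter.1 h3).2
      exact le_of_lt ((Metric.mem_thickening_iff_infDist_lt hBne).1 hmem)
    exact (hB.mem_iff_infDist_zero hBne).2 (le_antisymm hle Metric.infDist_nonneg)
  have hcard2 : F.card ≤ orbCount T θ B N ω y := by
    have h4 : Nat.card {i : Fin N // i ∈ F} ≤ Nat.card {i : Fin N // itr T θ (i : ℕ) ω y ∈ B} :=
      card_subtype_mono (fun i hi => hyB i hi)
    unfold orbCount
    rwa [Nat.card_eq_finsetCard] at h4
  have hlt : M < F.card := by have h5 := hFcard (g 0); rwa [hgF 0] at h5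
  exact absurd (hM y hy) (not_le.2 (lt_of_lt_of_le hlt hcard2))

lemma exists_partition [CompactSpace X]
    {k m : ℕ} {U : Fin k → Set X} (hUo : ∀ j, IsOpen (U j))
    (V : Fin m → Set X) (hVo : ∀ l, IsOpen (V l)) (hVcov : (⋃ l, V l) = Set.univ)
    (σ : Fin m → Fin k) (hVU : ∀ l, closure (V l) ⊆ U (σ l))
    {δ : ℝ} (hδ : 0 < δ) :
    ∃ φ : Fin k → X → ℝ,
      (∀ j, Continuous (φ j)) ∧ (∀ j x, φ j x ∈ Set.Icc (0 : ℝ) 1) ∧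
      (∀ x, ∑ j : Fin k, φ j x = 1) ∧ (∀ j x, x ∉ U j → φ j x = 0) ∧
      (⋃ j : Fin k, (φ j) ⁻¹' Set.Ioo (0 : ℝ) 1)
        ⊆ Metric.thickening δ (⋃ l, frontier (V l)) := by
  classical
  set B : Set X := ⋃ l, frontier (V l) with hB
  set W : Fin m → Set X := fun l => closure (V l) \ ⋃ i : Fin m, ⋃ (_ : i < l), V i with hW
  have hWclosed : ∀ l, IsClosed (W l) :=
    fun l => isClosed_closure.sdiff (isOpen_iUnion fun i => isOpen_iUnion fun _ => hVo i)
  have hWcov : ∀ x : X, ∃ l, x ∈ W l := by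
    intro x
    have hx : ∃ l, x ∈ V l := mem_iUnion.1 (hVcov ▸ Set.mem_univ x)
    set Fs : Finset (Fin m) := Finset.univ.filter (fun l => x ∈ V l) with hFs
    have hFsne : Fs.Nonempty := ⟨hx.choose, by simp [hFs, hx.choose_spec]⟩
    refine ⟨Fs.min' hFsne, subset_closure ?_, ?_⟩
    · have h6 := Fs.min'_mem hFsne
      simpa [hFs] using h6
    · intro hxc
      obtain ⟨i, hi⟩ := mem_iUnion.1 hxc
      obtain ⟨hil, hxi⟩ := mem_iUnion.1 hi
      exact absurd (Fs.min'_le i (by simp [hFs, hxi])) (not_le.2 hil)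
  have hWB : ∀ {l l' : Fin m}, l ≠ l' → ∀ {x : X}, x ∈ W l → x ∈ W l' → x ∈ B := by
    intro l l' hne x hl hl'
    rcases lt_or_gt_of_ne hne with h | h
    · have hxV : x ∉ V l := fun hx => hl'.2 (mem_iUnion.2 ⟨l, mem_iUnion.2 ⟨h, hx⟩⟩)
      refine mem_iUnion.2 ⟨l, ?_⟩
      rw [(hVo l).frontier_eq]
      exact ⟨hl.1, hxV⟩
    · have hxV : x ∉ V l' := fun hx => hl.2 (mem_iUnion.2 ⟨l', mem_iUnion.2 ⟨h, hx⟩⟩)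
      refine mem_iUnion.2 ⟨l', ?_⟩
      rw [(hVo l').frontier_eq]
      exact ⟨hl'.1, hxV⟩
  set C : Fin m → Set X := fun l => W l \ Metric.thickening δ B with hC
  have hCclosed : ∀ l, IsClosed (C l) := fun l => (hWclosed l).sdiff Metric.isOpen_thickening
  set O : Fin m → Set X := fun l => U (σ l) \ ⋃ l' : {l' : Fin m // l' ≠ l}, C l' with hO
  have hOopen : ∀ l, IsOpen (O l) :=
    fun l => (hUo _).sdiff (isClosed_iUnion_of_finite fun l' => hCclosed l')
  have hWO : ∀ l, W l ⊆ O l := by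
    intro l x hx
    refine ⟨hVU l hx.1, ?_⟩
    intro hmem
    obtain ⟨l', hl'⟩ := mem_iUnion.1 hmem
    exact hl'.2 (Metric.self_subset_thickening hδ B (hWB l'.2 hl'.1 hx))
  have hr : ∀ l, ∃ r : ℝ, 0 < r ∧ ((W l).Nonempty → Metric.thickening r (W l) ⊆ O l) := by
    intro l
    obtain ⟨r, hr0, hrsub⟩ :=
      ((hWclosed l).isCompact).exists_thickening_subset_open (hOopen l) (hWO l)
    exact ⟨r, hr0, fun _ => hrsub⟩
  choose r hr0 hrsub using hr
  set ψ : Fin m → X → ℝ := fun l =>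
    if (W l).Nonempty then (fun x => max 0 (1 - Metric.infDist x (W l) / r l))
    else (fun _ => 0) with hψ
  have hψcont : ∀ l, Continuous (ψ l) := by
    intro l
    rw [hψ]; dsimp only; split_ifs with h
    · exact continuous_const.max
        (continuous_const.sub ((Metric.continuous_infDist_pt _).div_const _))
    · exact continuous_const
  have hψ0 : ∀ l x, 0 ≤ ψ l x := by
    intro l x; rw [hψ]; dsimp only; split_ifs with h
    · exact le_max_left _ _
    · exact le_refl 0
  have hψle1 : ∀ l x, ψ l x ≤ 1 := by
    intro l x; rw [hψ]; dsimp only; split_ifs with h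
    · apply max_le zero_le_one
      exact sub_le_self 1 (div_nonneg Metric.infDist_nonneg (hr0 l).le)
    · exact zero_le_one
  have hψ_one : ∀ l x, x ∈ W l → ψ l x = 1 := by
    intro l x hx; rw [hψ]; dsimp only
    rw [if_pos ⟨x, hx⟩, Metric.infDist_zero_of_mem hx, zero_div]
    norm_num
  have hψ_pos_sub : ∀ l x, 0 < ψ l x → x ∈ O l := by
    intro l x hpos
    rw [hψ] at hpos; dsimp only at hpos
    split_ifs at hpos with h
    · have h1 : 0 < 1 - Metric.infDist x (W l) / r l := by
        rcases lt_max_iff.1 hpos with h2 | h2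
        · exact absurd h2 (lt_irrefl 0)
        · exact h2
      have h2 : Metric.infDist x (W l) < r l :=
        (div_lt_one (hr0 l)).1 (by linarith [sub_pos.1 h1])
      exact hrsub l h ((Metric.mem_thickening_iff_infDist_lt h).2 h2)
    · exact absurd hpos (lt_irrefl 0)
  set S : X → ℝ := fun x => ∑ l : Fin m, ψ l x with hS
  have hScont : Continuous S := continuous_finset_sum _ (fun l _ => hψcont l)
  have hS1 : ∀ x, 1 ≤ S x := by
    intro x
    obtain ⟨l, hl⟩ := hWcov x
    calc (1 : ℝ) = ψ l x := (hψ_one l x hl).symm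
      _ ≤ S x := Finset.single_le_sum (fun i _ => hψ0 i x) (Finset.mem_univ l)
  have hSpos : ∀ x, 0 < S x := fun x => zero_lt_one.trans_le (hS1 x)
  set φ : Fin k → X → ℝ := fun j x =>
    (∑ l ∈ Finset.univ.filter (fun l => σ l = j), ψ l x) / S x with hφ
  have hnum_nonneg : ∀ j x, 0 ≤ ∑ l ∈ Finset.univ.filter (fun l => σ l = j), ψ l x :=
    fun j x => Finset.sum_nonneg fun l _ => hψ0 l x
  have hnum_le : ∀ j x, (∑ l ∈ Finset.univ.filter (fun l => σ l = j), ψ l x) ≤ S x := by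
    intro j x
    rw [hS]; dsimp only
    exact Finset.sum_le_sum_of_subset_of_nonneg (Finset.subset_univ _)
      (fun i _ _ => hψ0 i x)
  refine ⟨φ, ?_, ?_, ?_, ?_, ?_⟩
  · intro j
    rw [hφ]; dsimp only
    exact (continuous_finset_sum _ (fun l _ => hψcont l)).div hScont
      (fun x => (hSpos x).ne')
  · intro j x
    exact ⟨div_nonneg (hnum_nonneg j x) (hSpos x).le,
      (div_le_one (hSpos x)).2 (hnum_le j x)⟩
  · intro x
    rw [hφ]; dsimp only
    rw [← Finset.sum_div, Finset.sum_fiberwise]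
    exact div_self (hSpos x).ne'
  · intro j x hx
    rw [hφ]; dsimp only
    have h8 : ∀ l ∈ Finset.univ.filter (fun l => σ l = j), ψ l x = 0 := by
      intro l hl
      obtain ⟨-, hlj⟩ := Finset.mem_filter.1 hl
      by_contra hne
      have hpos : 0 < ψ l x := lt_of_le_of_ne (hψ0 l x) (Ne.symm hne)
      exact hx (hlj ▸ (hψ_pos_sub l x hpos).1)
    rw [Finset.sum_eq_zero h8, zero_div]
  · intro x hx
    by_contra hxB
    obtain ⟨j, hj⟩ := mem_iUnion.1 hx
    obtain ⟨l₀, hl₀⟩ := hWcov x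
    have hC₀ : x ∈ C l₀ := ⟨hl₀, hxB⟩
    have hψz : ∀ l, l ≠ l₀ → ψ l x = 0 := by
      intro l hne
      by_contra hzz
      have hpos : 0 < ψ l x := lt_of_le_of_ne (hψ0 l x) (Ne.symm hzz)
      have hxO := hψ_pos_sub l x hpos
      exact hxO.2 (mem_iUnion.2 ⟨⟨l₀, Ne.symm hne⟩, hC₀⟩)
    have hSx : S x = 1 := by
      rw [hS]; dsimp only
      rw [Finset.sum_eq_single l₀ (fun l _ hne => hψz l hne)
        (fun h => absurd (Finset.mem_univ l₀) h)]
      exact hψ_one l₀ x hl₀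
    have hnum : (∑ l ∈ Finset.univ.filter (fun l => σ l = j), ψ l x)
        = if σ l₀ = j then 1 else 0 := by
      split_ifs with hσj
      · rw [Finset.sum_eq_single_of_mem l₀
          (Finset.mem_filter.2 ⟨Finset.mem_univ _, hσj⟩)
          (fun l _ hne => hψz l hne)]
        exact hψ_one l₀ x hl₀
      · apply Finset.sum_eq_zero
        intro l hl
        obtain ⟨-, hlj⟩ := Finset.mem_filter.1 hl
        exact hψz l (fun h => hσj (h ▸ hlj))
    have hval : φ j x = if σ l₀ = j then 1 else 0 := by
      simp only [hφ]
      rw [hnum, hSx]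
      split_ifs <;> norm_num
    have hj' : φ j x ∈ Set.Ioo (0 : ℝ) 1 := hj
    rw [hval] at hj'
    split_ifs at hj' with h9
    · exact absurd hj'.2 (lt_irrefl 1)
    · exact absurd hj'.1 (lt_irrefl 0)

end MetricX

end Helpers
set_option maxHeartbeats 1000000 in
theorem stmt19
    {Ω X : Type*} [MeasurableSpace Ω]
    (P : MeasureTheory.Measure Ω) [MeasureTheory.IsProbabilityMeasure P] [P.IsComplete]
    [MetricSpace X] [CompactSpace X] [MeasurableSpace X] [BorelSpace X]
    (θ : Ω → Ω) (hθ : MeasureTheory.MeasurePreserving θ P P)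
    (E : Set (Ω × X)) (hE : MeasurableSet E)
    (hEne : ∀ ω, (fiber E ω).Nonempty) (hEcp : ∀ ω, IsCompact (fiber E ω))
    (T : Ω → X → X) (hTm : Measurable fun p : Ω × X => T p.1 p.2)
    (hTmap : ∀ᵐ ω ∂P, Set.MapsTo (T ω) (fiber E ω) (fiber E (θ ω)))
    (hTc : ∀ᵐ ω ∂P, ContinuousOn (T ω) (fiber E ω))
    (hSBP : ∀ (x : X) (U : Set X), IsOpen U → x ∈ U →
      ∃ V : Set X, IsOpen V ∧ x ∈ V ∧ V ⊆ U ∧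
        ∀ᵐ ω ∂P, ocap T θ E (frontier V) ω = 0) :
    ∀ (k : ℕ) (U : Fin k → Set X), IsOpenCover U → ∀ ε : ℝ, 0 < ε →
      ∀ᵐ ω ∂P, ∃ N₀ : ℕ, 0 < N₀ ∧ ∀ N : ℕ, N₀ < N →
        ∃ φ : Fin k → X → ℝ,
          (∀ j, Continuous (φ j)) ∧
          (∀ j x, φ j x ∈ Set.Icc (0 : ℝ) 1) ∧
          (∀ x, ∑ j : Fin k, φ j x = 1) ∧
          (∀ j x, x ∉ U j → φ j x = 0) ∧
          ∀ x ∈ fiber E ω,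
            (orbCount T θ (⋃ j : Fin k, (φ j) ⁻¹' Set.Ioo (0 : ℝ) 1) N ω x : ℝ) / N
              < ε := by
  intro k U hU ε hε
  classical
  have hΩne : Nonempty Ω := by
    obtain ⟨ω₀, -⟩ := MeasureTheory.nonempty_of_measure_ne_zero
      (show P Set.univ ≠ 0 by simp)
    exact ⟨ω₀⟩
  have hXne : Nonempty X := ⟨(hEne (Classical.arbitrary Ω)).some⟩
  -- Step 1: a finite cover by open sets with small boundaries, refining `U` via closures.
  have hreg : ∀ x : X, ∃ V : Set X, IsOpen V ∧ x ∈ V ∧ (∃ j, closure V ⊆ U j) ∧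
      ∀ᵐ ω ∂P, ocap T θ E (frontier V) ω = 0 := by
    intro x
    obtain ⟨j, hj⟩ : ∃ j, x ∈ U j := mem_iUnion.1 (hU.2 ▸ Set.mem_univ x)
    obtain ⟨U', hU'o, hxU', hclU'⟩ := normal_exists_closure_subset
      (isClosed_singleton (x := x)) (hU.1 j) (Set.singleton_subset_iff.2 hj)
    obtain ⟨V, hVo, hxV, hVU', hVsmall⟩ :=
      hSBP x U' hU'o (Set.singleton_subset_iff.1 hxU')
    exact ⟨V, hVo, hxV, ⟨j, (closure_mono hVU').trans hclU'⟩, hVsmall⟩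
  choose Vx hVxo hxVx hVxU hVxsmall using hreg
  obtain ⟨t, ht⟩ := isCompact_univ.elim_finite_subcover Vx hVxo
    (fun x _ => mem_iUnion.2 ⟨x, hxVx x⟩)
  set m := t.card with hmdef
  have hm : 0 < m := by
    rcases t.eq_empty_or_nonempty with rfl | h
    · exfalso
      have h1 := ht (Set.mem_univ hXne.some)
      simp at h1
    · exact Finset.card_pos.2 h
  set eqt := t.equivFin with heqt
  set V : Fin m → Set X := fun l => Vx ((eqt.symm l : t) : X) with hV
  set σfun : Fin m → Fin k := fun l => (hVxU ((eqt.symm l : t) : X)).choose with hσfun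
  have hσ : ∀ l, closure (V l) ⊆ U (σfun l) := fun l => (hVxU _).choose_spec
  have hVopen : ∀ l, IsOpen (V l) := fun l => hVxo _
  have hVcover : (⋃ l, V l) = Set.univ := by
    apply Set.eq_univ_of_univ_subset
    intro x hx
    obtain ⟨y, hyt, hxy⟩ := mem_iUnion₂.1 (ht hx)
    refine mem_iUnion.2 ⟨eqt ⟨y, hyt⟩, ?_⟩
    rw [hV]
    simpa using hxy
  -- a.e. statements
  have hae_small : ∀ᵐ ω ∂P, ∀ l : Fin m, ocap T θ E (frontier (V l)) ω = 0 :=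
    Filter.eventually_all.2 fun l => hVxsmall _
  have hae_good : ∀ᵐ ω ∂P, ω ∈ Good T θ E := good_ae hθ hTmap hTc
  filter_upwards [hae_small, hae_good] with ω hsmall hgood
  -- Step 2: eventual bound on boundary visit counts
  have hev : ∀ᶠ N : ℕ in Filter.atTop, ∀ l : Fin m,
      (bsup T θ E (frontier (V l)) N ω : ℝ) / N < ε / m :=
    Filter.eventually_all.2 fun l => eventually_of_ocap_zero (hsmall l)
      (div_pos hε (by exact_mod_cast hm))
  obtain ⟨n₀, hn₀⟩ := Filter.eventually_atTop.1 hev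
  refine ⟨max n₀ 1, lt_of_lt_of_le one_pos (le_max_right _ _), ?_⟩
  intro N hN
  have hN1 : 1 ≤ N := le_trans (le_max_right n₀ 1) hN.le
  have hNpos : (0 : ℝ) < N := by exact_mod_cast hN1
  set M : ℕ := ∑ l : Fin m, bsup T θ E (frontier (V l)) N ω with hM
  have hMε : (M : ℝ) < ε * N := by
    have hb : ∀ l : Fin m, (bsup T θ E (frontier (V l)) N ω : ℝ) < ε / m * N := by
      intro l
      have h2 := hn₀ N (le_trans (le_max_left _ _) hN.le) l
      rwa [div_lt_iff₀ hNpos] at h2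
    have hne : Nonempty (Fin m) := ⟨⟨0, hm⟩⟩
    calc (M : ℝ) = ∑ l : Fin m, (bsup T θ E (frontier (V l)) N ω : ℝ) := by
          rw [hM]; push_cast; rfl
      _ < ∑ _l : Fin m, ε / m * N :=
          Finset.sum_lt_sum_of_nonempty Finset.univ_nonempty (fun l _ => hb l)
      _ = m * (ε / m * N) := by
          rw [Finset.sum_const, Finset.card_univ, Fintype.card_fin, nsmul_eq_mul]
      _ = ε * N := by
          field_simp
  -- Step 3: pointwise bound for the union of boundaries
  set B : Set X := ⋃ l, frontier (V l) with hBdef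
  have hBclosed : IsClosed B := isClosed_iUnion_of_finite fun l => isClosed_frontier
  have hMB : ∀ y ∈ fiber E ω, orbCount T θ B N ω y ≤ M := by
    intro y hy
    have h1 : orbCount T θ B N ω y ≤ ∑ l : Fin m, orbCount T θ (frontier (V l)) N ω y := by
      have h2 : B = ⋃ l ∈ (Finset.univ : Finset (Fin m)), frontier (V l) := by
        rw [hBdef]
        simp only [Finset.mem_univ, Set.iUnion_true]
      rw [h2]
      exact orbCount_biUnion_le T θ _ _ N ω y
    exact le_trans h1 (Finset.sum_le_sum fun l _ => le_bsup hy)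
  obtain ⟨δ, hδ, hδcount⟩ :=
    exists_thickening_orbCount_le (hEcp ω) hgood B hBclosed N M hMB
  -- Step 4: the partition of unity
  obtain ⟨φ, hφc, hφ01, hφsum, hφvan, hφA⟩ :=
    exists_partition hU.1 V hVopen hVcover σfun hσ hδ
  refine ⟨φ, hφc, hφ01, hφsum, hφvan, ?_⟩
  intro x hx
  have h1 : orbCount T θ (⋃ j : Fin k, (φ j) ⁻¹' Set.Ioo (0 : ℝ) 1) N ω x ≤ M :=
    le_trans (orbCount_mono hφA N ω x) (hδcount x hx)
  calc (orbCount T θ (⋃ j : Fin k, (φ j) ⁻¹' Set.Ioo (0 : ℝ) 1) N ω x : ℝ) / N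
      ≤ (M : ℝ) / N := by
        gcongr
    _ < ε := (div_lt_iff₀ hNpos).2 hMε
end
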